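/- arXiv:2108.07355 — 6 statements merged into one kernel-verified Lean document; each statement's English description precedes it below -/
import Mathlib

section
/- Let Z be a uniformly random deck with multiplicities 𝐦 = (m_1,…,m_n), and let i_1 ≠ i_2 be types with m_{i_1} ≥ 1. Pick a position uniformly at random among the m_{i_1} positions holding a card of type i_1, and replace the card at that position by a card of type i_2. Then the resulting word is a uniformly random deck with multiplicities 𝐦', where m'_{i_1} = m_{i_1} − 1, m'_{i_2} = m_{i_2} + 1, and m'_i = m_i for all other i; in particular every word with multiplicities 𝐦' occurs with probability (∏_i m'_i!)/N!. -/
open Finset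

/-- The set of decks (words) with `n` card types where type `i` appears exactly `m i` times. -/
def decks (n : ℕ) (m : Fin n → ℕ) : Finset (Fin (∑ i, m i) → Fin n) :=
  Finset.univ.filter fun w => ∀ i, (Finset.univ.filter fun s => w s = i).card = m i

/-- Probability of an event under the uniformly random deck with multiplicities `m`. -/
noncomputable def pr (n : ℕ) (m : Fin n → ℕ)
    (E : (Fin (∑ i, m i) → Fin n) → Prop) : ℝ :=
  letI := Classical.decPred E
  (((decks n m).filter E).card : ℝ) / ((decks n m).card : ℝ)

/-- Expectation of a function of the uniformly random deck with multiplicities `m`. -/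
noncomputable def expect (n : ℕ) (m : Fin n → ℕ)
    (f : (Fin (∑ i, m i) → Fin n) → ℝ) : ℝ :=
  (∑ w ∈ decks n m, f w) / ((decks n m).card : ℝ)

/-- `T j w` : the last time `t` such that no card type appears more than `j` times
among the first `t` cards `w 0, …, w (t-1)`. -/
noncomputable def T {n N : ℕ} (j : ℕ) (w : Fin N → Fin n) : ℕ :=
  sSup {t | t ≤ N ∧ ∀ i : Fin n,
    (Finset.univ.filter fun s : Fin N => (s : ℕ) < t ∧ w s = i).card ≤ j}

/-- `W j t w` : the number of `(j+1)`-element sets of positions among the first `t`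
positions on which `w` takes a common value. -/
def W {n N : ℕ} (j t : ℕ) (w : Fin N → Fin n) : ℕ :=
  ((Finset.univ.powersetCard (j + 1)).filter fun S : Finset (Fin N) =>
    (∀ s ∈ S, (s : ℕ) < t) ∧ ∃ i, ∀ s ∈ S, w s = i).card

/-- `beta n m j = (1/n) ∑ᵢ C(mᵢ, j) / m^j` where `m = N/n` is the average multiplicity. -/
noncomputable def beta (n : ℕ) (m : Fin n → ℕ) (j : ℕ) : ℝ :=
  (1 / (n : ℝ)) * ∑ i, ((m i).choose j : ℝ) / (((∑ k, m k : ℕ) : ℝ) / (n : ℝ)) ^ j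

/-- The number of correct guesses of the strategy `g` on the deck `w`, the cards being
revealed in order `w 0, w 1, …`; before the `t`-th card is revealed the guesser sees the
list of previously revealed cards. -/
def score {n N : ℕ} (g : List (Fin n) → Fin n) (w : Fin N → Fin n) : ℕ :=
  (Finset.univ.filter fun t : Fin N => g ((List.ofFn w).take (t : ℕ)) = w t).card

/-- Expected number of correct guesses under the best strategy. -/
noncomputable def ESplus (n : ℕ) (m : Fin n → ℕ) : ℝ :=
  ⨆ g : List (Fin n) → Fin n, expect n m fun w => (score g w : ℝ)

/-- Expected number of correct guesses under the worst strategy. -/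
noncomputable def ESminus (n : ℕ) (m : Fin n → ℕ) : ℝ :=
  ⨅ g : List (Fin n) → Fin n, expect n m fun w => (score g w : ℝ)

/-- Harmonic number `H k = 1 + 1/2 + ⋯ + 1/k`. -/
noncomputable def harm (k : ℕ) : ℝ := ∑ i ∈ Finset.range k, (1 : ℝ) / (i + 1)


-- Auxiliary lemmas ---------------------------------------------------------

private def permFiberEquiv {n N : ℕ} (w₀ w : Fin N → Fin n) :
    {σ : Equiv.Perm (Fin N) // ∀ s, w₀ (σ s) = w s} ≃
      ∀ i : Fin n, ({s : Fin N // w s = i} ≃ {s : Fin N // w₀ s = i}) where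
  toFun := fun σ i =>
    { toFun := fun s => ⟨σ.1 s.1, by rw [σ.2]; exact s.2⟩
      invFun := fun s => ⟨σ.1.symm s.1, by
        have := σ.2 (σ.1.symm s.1); rw [Equiv.apply_symm_apply] at this; rw [← this]; exact s.2⟩
      left_inv := fun s => by simp
      right_inv := fun s => by simp }
  invFun := fun e =>
    ⟨(Equiv.sigmaFiberEquiv w).symm.trans ((Equiv.sigmaCongrRight e).trans (Equiv.sigmaFiberEquiv w₀)),
      fun s => (e (w s) ⟨s, rfl⟩).2⟩
  left_inv := fun σ => Subtype.ext (Equiv.ext fun s => rfl)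
  right_inv := fun e => by
    funext i
    apply Equiv.ext
    rintro ⟨s, hs⟩
    apply Subtype.ext
    subst hs
    rfl

private lemma card_perm_fiber {n N : ℕ} (w₀ w : Fin N → Fin n) (m : Fin n → ℕ)
    (h₀ : ∀ i, (univ.filter fun s => w₀ s = i).card = m i)
    (h : ∀ i, (univ.filter fun s => w s = i).card = m i) :
    (univ.filter fun σ : Equiv.Perm (Fin N) => w₀ ∘ σ = w).card = ∏ i, (m i).factorial := by
  have hcard : ∀ i : Fin n, Fintype.card {s : Fin N // w s = i} = Fintype.card {s : Fin N // w₀ s = i} := by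
    intro i; rw [Fintype.card_subtype, Fintype.card_subtype, h, h₀]
  calc (univ.filter fun σ : Equiv.Perm (Fin N) => w₀ ∘ σ = w).card
      = Fintype.card {σ : Equiv.Perm (Fin N) // ∀ s, w₀ (σ s) = w s} := by
        rw [Fintype.card_subtype]
        congr 1
        ext σ
        simp [funext_iff, Function.comp]
    _ = Fintype.card (∀ i : Fin n, ({s : Fin N // w s = i} ≃ {s : Fin N // w₀ s = i})) :=
        Fintype.card_congr (permFiberEquiv w₀ w)
    _ = ∏ i, (m i).factorial := by
        rw [Fintype.card_pi]
        refine Finset.prod_congr rfl fun i _ => ?_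
        rw [Fintype.card_equiv (Fintype.equivOfCardEq (hcard i)), Fintype.card_subtype, h]

private lemma fibercard_comp {n N : ℕ} (w : Fin N → Fin n) (σ : Equiv.Perm (Fin N)) (i : Fin n) :
    (univ.filter fun s => w (σ s) = i).card = (univ.filter fun s => w s = i).card := by
  apply Finset.card_bij (fun s _ => σ s)
  · intro s hs; simp_all
  · intro a _ b _ h; exact σ.injective h
  · intro b hb; exact ⟨σ.symm b, by simp_all, by simp⟩

private lemma card_words_mul {n N : ℕ} (m : Fin n → ℕ) (w₀ : Fin N → Fin n)
    (h₀ : ∀ i, (univ.filter fun s => w₀ s = i).card = m i) :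
    (univ.filter fun w : Fin N → Fin n =>
      ∀ i, (univ.filter fun s => w s = i).card = m i).card * ∏ i, (m i).factorial
      = N.factorial := by
  set D := univ.filter fun w : Fin N → Fin n =>
      ∀ i, (univ.filter fun s => w s = i).card = m i with hD
  have key : (univ : Finset (Equiv.Perm (Fin N))).card
      = ∑ w ∈ D, (univ.filter fun σ : Equiv.Perm (Fin N) => w₀ ∘ σ = w).card := by
    apply Finset.card_eq_sum_card_fiberwise (f := fun σ : Equiv.Perm (Fin N) => w₀ ∘ σ)
    intro σ _
    simp only [hD, mem_coe, mem_filter, mem_univ, true_and]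
    intro i
    rw [← h₀ i]
    exact fibercard_comp w₀ σ i
  have huniv : (univ : Finset (Equiv.Perm (Fin N))).card = N.factorial := by
    rw [Finset.card_univ, Fintype.card_perm, Fintype.card_fin]
  have h2 : ∑ w ∈ D, (univ.filter fun σ : Equiv.Perm (Fin N) => w₀ ∘ σ = w).card
      = D.card * ∏ i, (m i).factorial := by
    rw [Finset.sum_congr rfl (fun w (hw : w ∈ D) => card_perm_fiber w₀ w m h₀
      ((mem_filter.mp hw).2)), Finset.sum_const, smul_eq_mul]
  rw [← huniv, key, h2]

private lemma card_decks_mul (n : ℕ) (m : Fin n → ℕ) (w₀ : Fin (∑ i, m i) → Fin n)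
    (h₀ : w₀ ∈ decks n m) :
    (decks n m).card * ∏ i, (m i).factorial = (∑ i, m i).factorial :=
  card_words_mul m w₀ (mem_filter.mp h₀).2

private lemma update_mem_decks (n : ℕ) (m : Fin n → ℕ) (i₁ i₂ : Fin n) (hne : i₁ ≠ i₂)
    (h1 : 1 ≤ m i₁) (w' : Fin (∑ i, m i) → Fin n)
    (hw' : ∀ i : Fin n, (Finset.univ.filter fun s => w' s = i).card =
      (if i = i₁ then m i₁ - 1 else if i = i₂ then m i₂ + 1 else m i))
    (p : Fin (∑ i, m i)) (hp : w' p = i₂) :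
    Function.update w' p i₁ ∈ decks n m := by
  simp only [decks, mem_filter, mem_univ, true_and]
  intro i
  by_cases hi1 : i = i₁
  · subst hi1
    have he : (univ.filter fun s => Function.update w' p i s = i)
        = insert p (univ.filter fun s => w' s = i) := by
      ext s
      rcases eq_or_ne s p with rfl | hsp
      · simp
      · simp [Function.update_of_ne hsp, hsp]
    rw [he, Finset.card_insert_of_notMem (by simp [hp, Ne.symm hne]), hw' i]
    simp [Nat.sub_add_cancel h1]
  by_cases hi2 : i = i₂
  · subst hi2
    have he : (univ.filter fun s => Function.update w' p i₁ s = i)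
        = (univ.filter fun s => w' s = i).erase p := by
      ext s
      rcases eq_or_ne s p with rfl | hsp
      · simp [hne]
      · simp [Function.update_of_ne hsp, hsp]
    rw [he, Finset.card_erase_of_mem (by simp [hp]), hw' i]
    simp [Ne.symm hne]
  · have he : (univ.filter fun s => Function.update w' p i₁ s = i)
        = univ.filter fun s => w' s = i := by
      ext s
      rcases eq_or_ne s p with rfl | hsp
      · simp [Ne.symm hi1, hp, Ne.symm hi2, hi1]
      · simp [Function.update_of_ne hsp]
    rw [he, hw' i]
    simp [hi1, hi2]

private lemma sum_counts (n : ℕ) (m : Fin n → ℕ) (i₁ i₂ : Fin n) (hne : i₁ ≠ i₂)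
    (h1 : 1 ≤ m i₁) (w' : Fin (∑ i, m i) → Fin n)
    (hw' : ∀ i : Fin n, (Finset.univ.filter fun s => w' s = i).card =
      (if i = i₁ then m i₁ - 1 else if i = i₂ then m i₂ + 1 else m i)) :
    ∑ w ∈ decks n m,
      (Finset.univ.filter fun p => w p = i₁ ∧ Function.update w p i₂ = w').card
    = m i₂ + 1 := by
  have key : ∑ w ∈ decks n m,
      (Finset.univ.filter fun p => w p = i₁ ∧ Function.update w p i₂ = w').card
      = (univ.filter fun p => w' p = i₂).card := by
    rw [← Finset.card_sigma]
    apply Finset.card_bij (fun x _ => x.2)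
    · rintro ⟨w, p⟩ hx
      simp only [Finset.mem_sigma, mem_filter, mem_univ, true_and] at hx ⊢
      rw [← hx.2.2]
      simp
    · rintro ⟨w, p⟩ hx ⟨v, q⟩ hy (h : p = q)
      subst h
      simp only [Finset.mem_sigma, mem_filter, mem_univ, true_and] at hx hy
      have hw : w = Function.update w' p i₁ := by
        rw [← hx.2.2, Function.update_idem, ← hx.2.1, Function.update_eq_self]
      have hv : v = Function.update w' p i₁ := by
        rw [← hy.2.2, Function.update_idem, ← hy.2.1, Function.update_eq_self]
      subst hw; rw [hv]
    · intro p hp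
      simp only [mem_filter, mem_univ, true_and] at hp
      refine ⟨⟨Function.update w' p i₁, p⟩, ?_, rfl⟩
      simp only [Finset.mem_sigma, mem_filter, mem_univ, true_and]
      refine ⟨update_mem_decks n m i₁ i₂ hne h1 w' hw' p hp, by simp, ?_⟩
      rw [Function.update_idem, ← hp, Function.update_eq_self]
  rw [key, hw' i₂, if_neg (Ne.symm hne), if_pos rfl]

private lemma prod_fact_update (n : ℕ) (m : Fin n → ℕ) (i₁ i₂ : Fin n) (hne : i₁ ≠ i₂)
    (h1 : 1 ≤ m i₁) :
    (∏ i, ((if i = i₁ then m i₁ - 1 else if i = i₂ then m i₂ + 1 else m i).factorial)) * m i₁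
      = (∏ i, (m i).factorial) * (m i₂ + 1) := by
  have key : ∀ i : Fin n,
      ((if i = i₁ then m i₁ - 1 else if i = i₂ then m i₂ + 1 else m i).factorial)
        * (if i = i₁ then m i₁ else 1)
      = (m i).factorial * (if i = i₂ then m i₂ + 1 else 1) := by
    intro i
    by_cases hi1 : i = i₁
    · subst hi1
      obtain ⟨k, hk⟩ : ∃ k, m i = k + 1 := ⟨m i - 1, by omega⟩
      simp only [if_neg hne, mul_one, hk, Nat.add_sub_cancel, Nat.factorial_succ, ite_true,
        eq_self_iff_true, if_true]
      ring
    by_cases hi2 : i = i₂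
    · subst hi2
      simp only [if_neg hi1, mul_one, Nat.factorial_succ, ite_true, eq_self_iff_true, if_true]
      ring
    · simp [if_neg hi1, if_neg hi2]
  calc (∏ i, ((if i = i₁ then m i₁ - 1 else if i = i₂ then m i₂ + 1 else m i).factorial)) * m i₁
      = ∏ i, (((if i = i₁ then m i₁ - 1 else if i = i₂ then m i₂ + 1 else m i).factorial)
          * (if i = i₁ then m i₁ else 1)) := by
        rw [Finset.prod_mul_distrib, Finset.prod_ite_eq' univ i₁ (fun _ => m i₁), if_pos (mem_univ i₁)]
    _ = ∏ i, ((m i).factorial * (if i = i₂ then m i₂ + 1 else 1)) := Finset.prod_congr rfl fun i _ => key i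
    _ = (∏ i, (m i).factorial) * (m i₂ + 1) := by
        rw [Finset.prod_mul_distrib, Finset.prod_ite_eq' univ i₂ (fun _ => m i₂ + 1), if_pos (mem_univ i₂)]

/-- Lemma: changing one uniformly chosen card keeps the deck uniform.
Starting from a uniformly random deck with multiplicities `m`, pick a position uniformly
among the `m i₁` positions holding a card of type `i₁ ≠ i₂` and replace that card by a card
of type `i₂`.  Then every word `w'` with the new multiplicities
(`m i₁ - 1` cards of type `i₁`, `m i₂ + 1` of type `i₂`, `m i` otherwise) occurs with
probability `(∏ i (m' i)!)/N!`. -/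
theorem change_one_card (n : ℕ) (m : Fin n → ℕ) (i₁ i₂ : Fin n) (hne : i₁ ≠ i₂)
    (h1 : 1 ≤ m i₁) (w' : Fin (∑ i, m i) → Fin n)
    (hw' : ∀ i : Fin n, (Finset.univ.filter fun s => w' s = i).card =
      (if i = i₁ then m i₁ - 1 else if i = i₂ then m i₂ + 1 else m i)) :
    (∑ w ∈ decks n m,
        (((Finset.univ.filter
            fun p => w p = i₁ ∧ Function.update w p i₂ = w').card : ℝ) / (m i₁ : ℝ)))
      / ((decks n m).card : ℝ)
      =
    (∏ i, ((if i = i₁ then m i₁ - 1 else if i = i₂ then m i₂ + 1 else m i).factorial : ℝ))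
      / ((∑ i, m i).factorial : ℝ) := by
  have hpos : 0 < (Finset.univ.filter fun s => w' s = i₂).card := by
    rw [hw' i₂, if_neg (Ne.symm hne), if_pos rfl]; exact Nat.succ_pos _
  obtain ⟨p₀, hp₀⟩ := Finset.card_pos.mp hpos
  have hp₀' : w' p₀ = i₂ := (Finset.mem_filter.mp hp₀).2
  have hw₀ : Function.update w' p₀ i₁ ∈ decks n m :=
    update_mem_decks n m i₁ i₂ hne h1 w' hw' p₀ hp₀'
  have hB : (decks n m).card * ∏ i, (m i).factorial = (∑ i, m i).factorial :=
    card_decks_mul n m _ hw₀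
  have hsum := sum_counts n m i₁ i₂ hne h1 w' hw'
  have hQ := prod_fact_update n m i₁ i₂ hne h1
  have hm1 : (0:ℝ) < (m i₁ : ℝ) := by exact_mod_cast Nat.lt_of_lt_of_le Nat.zero_lt_one h1
  have hA : (0:ℝ) < ((decks n m).card : ℝ) := by
    exact_mod_cast Finset.card_pos.mpr ⟨_, hw₀⟩
  have hsumR : ∑ w ∈ decks n m,
      (((Finset.univ.filter
          fun p => w p = i₁ ∧ Function.update w p i₂ = w').card : ℝ) / (m i₁ : ℝ))
      = ((m i₂ : ℝ) + 1) / (m i₁ : ℝ) := by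
    rw [← Finset.sum_div, ← Nat.cast_sum, hsum]
    push_cast
    ring
  rw [hsumR]
  have hBR : ((decks n m).card : ℝ) * ∏ i, ((m i).factorial : ℝ) = ((∑ i, m i).factorial : ℝ) := by
    exact_mod_cast hB
  have hQR : (∏ i, ((if i = i₁ then m i₁ - 1 else if i = i₂ then m i₂ + 1 else m i).factorial : ℝ))
        * (m i₁ : ℝ)
      = (∏ i, ((m i).factorial : ℝ)) * ((m i₂ : ℝ) + 1) := by
    exact_mod_cast hQ
  have hPf : (0:ℝ) < ((∑ i, m i).factorial : ℝ) := by
    exact_mod_cast Nat.factorial_pos _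
  field_simp
  nlinarith [hBR, hQR, hA, hm1, hPf, mul_pos hA hm1]
end

section
/- Let Z be a deck with multiplicities 𝐦 = (m_1,…,m_n), let 1 ≤ j ≤ m*−1 and 1 ≤ t ≤ N, and set c = C(m*, j+1). Then for every real x with 0 ≤ x < E[W_j(t)], one has P(T_j ≥ t) ≤ exp(−x²/(2c·E[W_j(t)])). -/
open Finset

namespace TjAux

variable {n N : ℕ}

def cnt (t : ℕ) (i : Fin n) (w : Fin N → Fin n) : ℕ :=
  (Finset.univ.filter fun s : Fin N => (s : ℕ) < t ∧ w s = i).card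

lemma W_eq (j t : ℕ) (w : Fin N → Fin n) :
    W j t w = ∑ i, (cnt t i w).choose (j + 1) := by
  classical
  have hset : ((Finset.univ.powersetCard (j + 1)).filter fun S : Finset (Fin N) =>
      (∀ s ∈ S, (s : ℕ) < t) ∧ ∃ i, ∀ s ∈ S, w s = i)
      = Finset.univ.biUnion (fun i : Fin n =>
        (Finset.univ.filter fun s : Fin N => (s : ℕ) < t ∧ w s = i).powersetCard (j + 1)) := by
    ext S
    constructor
    · intro hS
      rw [mem_filter, mem_powersetCard] at hS
      obtain ⟨⟨-, hcard⟩, hlt, i, hi⟩ := hS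
      rw [mem_biUnion]
      exact ⟨i, mem_univ i, mem_powersetCard.2
        ⟨fun s hs => mem_filter.2 ⟨mem_univ s, hlt s hs, hi s hs⟩, hcard⟩⟩
    · intro hS
      rw [mem_biUnion] at hS
      obtain ⟨i, -, hS⟩ := hS
      rw [mem_powersetCard] at hS
      rw [mem_filter, mem_powersetCard]
      exact ⟨⟨subset_univ S, hS.2⟩, fun s hs => (mem_filter.1 (hS.1 hs)).2.1, i,
        fun s hs => (mem_filter.1 (hS.1 hs)).2.2⟩
  rw [W, hset, card_biUnion]
  · exact Finset.sum_congr rfl fun i _ => by rw [card_powersetCard]; rfl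
  · intro a _ b _ hab
    rw [Function.onFun, Finset.disjoint_left]
    intro S hSa hSb
    rw [mem_powersetCard] at hSa hSb
    have hpos : 0 < S.card := by rw [hSa.2]; omega
    obtain ⟨s, hs⟩ := Finset.card_pos.1 hpos
    have h1 := (mem_filter.1 (hSa.1 hs)).2.2
    have h2 := (mem_filter.1 (hSb.1 hs)).2.2
    exact hab (h1.symm.trans h2)

lemma cnt_mono (i : Fin n) (w : Fin N → Fin n) {t t' : ℕ} (h : t ≤ t') :
    cnt t i w ≤ cnt t' i w := by
  apply card_le_card
  intro s hs
  simp only [mem_filter] at hs ⊢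
  exact ⟨hs.1, lt_of_lt_of_le hs.2.1 h, hs.2.2⟩

lemma le_T_iff (j t : ℕ) (w : Fin N → Fin n) (ht : t ≤ N) :
    t ≤ T j w ↔ ∀ i, cnt t i w ≤ j := by
  have hbdd : BddAbove {t' | t' ≤ N ∧ ∀ i : Fin n,
      (Finset.univ.filter fun s : Fin N => (s : ℕ) < t' ∧ w s = i).card ≤ j} :=
    ⟨N, fun x hx => hx.1⟩
  constructor
  · intro h i
    have hne : {t' | t' ≤ N ∧ ∀ i : Fin n,
        (Finset.univ.filter fun s : Fin N => (s : ℕ) < t' ∧ w s = i).card ≤ j}.Nonempty :=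
      ⟨0, by simp⟩
    have hmem := Nat.sSup_mem hne hbdd
    exact le_trans (cnt_mono i w h) (hmem.2 i)
  · intro h
    exact le_csSup hbdd ⟨ht, h⟩

lemma W_eq_zero_iff (j t : ℕ) (w : Fin N → Fin n) :
    W j t w = 0 ↔ ∀ i, cnt t i w ≤ j := by
  rw [W_eq j t w, Finset.sum_eq_zero_iff]
  constructor
  · intro h i
    have := h i (mem_univ i)
    rw [Nat.choose_eq_zero_iff] at this
    omega
  · intro h i _
    rw [Nat.choose_eq_zero_iff]
    exact Nat.lt_succ_of_le (h i)

lemma le_T_iff_W (j t : ℕ) (w : Fin N → Fin n) (ht : t ≤ N) :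
    t ≤ T j w ↔ W j t w = 0 := by
  rw [le_T_iff j t w ht, W_eq_zero_iff]

/-! ### The swap involution -/

noncomputable def pig (S : Finset (Fin N)) (g : Fin N → Fin N) (p : Fin N) : Fin N :=
  if p ∈ S then g p else if h : ∃ s ∈ S, g s = p then h.choose else p

section pig

variable {S : Finset (Fin N)} {g : Fin N → Fin N}

lemma pig_mem {s : Fin N} (hs : s ∈ S) : pig S g s = g s := by
  rw [pig, if_pos hs]

variable (hg1 : ∀ s ∈ S, g s = s ∨ g s ∉ S)
  (hg2 : ∀ a ∈ S, ∀ b ∈ S, g a = g b → a = b)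

include hg1 hg2 in
lemma pig_g {s : Fin N} (hs : s ∈ S) : pig S g (g s) = s := by
  rcases hg1 s hs with h | h
  · rw [h, pig, if_pos (h ▸ hs), h]
  · have hex : ∃ s' ∈ S, g s' = g s := ⟨s, hs, rfl⟩
    rw [pig, if_neg h, dif_pos hex]
    exact hg2 _ hex.choose_spec.1 _ hs hex.choose_spec.2

include hg1 hg2 in
lemma pig_invol : Function.Involutive (pig S g) := by
  intro p
  by_cases hp : p ∈ S
  · rw [pig_mem hp]
    exact pig_g hg1 hg2 hp
  · by_cases hex : ∃ s ∈ S, g s = p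
    · have hpp : pig S g p = hex.choose := by rw [pig, if_neg hp, dif_pos hex]
      rw [hpp, pig_mem hex.choose_spec.1, hex.choose_spec.2]
    · have hpp : pig S g p = p := by rw [pig, if_neg hp, dif_neg hex]
      rw [hpp, hpp]

lemma pig_out {p : Fin N} (hp : p ∉ S) : pig S g p ∈ S ∨ pig S g p = p := by
  rw [pig, if_neg hp]
  by_cases hex : ∃ s ∈ S, g s = p
  · rw [dif_pos hex]; exact Or.inl hex.choose_spec.1
  · rw [dif_neg hex]; exact Or.inr rfl

include hg1 hg2 in
lemma comp_pig_invol (w : Fin N → Fin n) : (w ∘ pig S g) ∘ pig S g = w :=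
  funext fun p => congrArg w (pig_invol hg1 hg2 p)

end pig

/-! ### Counting functions which are injective on `A`, map `A` into `P`, and are `id` elsewhere -/

def MF (A P : Finset (Fin N)) : Finset (Fin N → Fin N) :=
  Finset.univ.filter fun g => (∀ p, p ∉ A → g p = p) ∧ (∀ s ∈ A, g s ∈ P) ∧
    (∀ a ∈ A, ∀ b ∈ A, g a = g b → a = b)

lemma MF_card (A P : Finset (Fin N)) : (MF A P).card = P.card.descFactorial A.card := by
  classical
  have h1 : ∀ g ∈ MF A P, (∀ p, p ∉ A → g p = p) ∧ (∀ s ∈ A, g s ∈ P) ∧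
      (∀ a ∈ A, ∀ b ∈ A, g a = g b → a = b) := fun g hg => (mem_filter.1 hg).2
  have h2 : ∀ f : Fin N → Fin N, ((∀ p, p ∉ A → f p = p) ∧ (∀ s ∈ A, f s ∈ P) ∧
      (∀ a ∈ A, ∀ b ∈ A, f a = f b → a = b)) → f ∈ MF A P :=
    fun f hf => mem_filter.2 ⟨mem_univ _, hf⟩
  rw [show P.card.descFactorial A.card
      = (Finset.univ : Finset ({x // x ∈ A} ↪ {x // x ∈ P})).card by
    rw [Finset.card_univ, Fintype.card_embedding_eq, Fintype.card_coe, Fintype.card_coe]]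
  refine Finset.card_bij'
    (fun g hg => ⟨fun a => ⟨g a, ((h1 g hg).2.1) a a.2⟩,
      fun a b hab => Subtype.ext
        ((h1 g hg).2.2 a a.2 b b.2 (congrArg Subtype.val hab))⟩)
    (fun e _ => fun p => if h : p ∈ A then (e ⟨p, h⟩ : Fin N) else p)
    (fun g hg => mem_univ _)
    (fun e he => h2 _ ⟨fun p hp => dif_neg hp,
      fun s hs => by rw [dif_pos hs]; exact (e ⟨s, hs⟩).2,
      fun a ha b hb hab => by
        rw [dif_pos ha, dif_pos hb] at hab
        exact congrArg Subtype.val (e.injective (Subtype.ext hab))⟩)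
    ?_ ?_
  · intro g hg
    funext p
    by_cases hp : p ∈ A
    · rw [dif_pos hp]; rfl
    · rw [dif_neg hp]; exact ((h1 g hg).1 p hp).symm
  · intro e he
    apply Function.Embedding.ext
    intro a
    apply Subtype.ext
    show (if h : (a : Fin N) ∈ A then ((e ⟨a, h⟩ : {x // x ∈ P}) : Fin N) else (a : Fin N))
      = (e a : Fin N)
    rw [dif_pos a.2]


/-! ### Decks and the conditioned decks -/

def DK (n N : ℕ) (m : Fin n → ℕ) : Finset (Fin N → Fin n) :=
  Finset.univ.filter fun w => ∀ b, (Finset.univ.filter fun s => w s = b).card = m b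

def D1 (n N : ℕ) (m : Fin n → ℕ) (i : Fin n) (S : Finset (Fin N)) : Finset (Fin N → Fin n) :=
  (DK n N m).filter fun v => ∀ s ∈ S, v s = i

def G1 (i : Fin n) (S : Finset (Fin N)) (w : Fin N → Fin n) : Finset (Fin N → Fin N) :=
  Finset.univ.filter fun g => (∀ p, p ∉ S → g p = p) ∧
    (∀ a ∈ S, ∀ b ∈ S, g a = g b → a = b) ∧
    ∀ s ∈ S, (w s = i → g s = s) ∧ (w s ≠ i → g s ∉ S ∧ w (g s) = i)

def G2 (i : Fin n) (S : Finset (Fin N)) (v : Fin N → Fin n) : Finset (Fin N → Fin N) :=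
  Finset.univ.filter fun g => (∀ p, p ∉ S → g p = p) ∧
    (∀ a ∈ S, ∀ b ∈ S, g a = g b → a = b) ∧
    ∀ s ∈ S, g s = s ∨ (g s ∉ S ∧ v (g s) ≠ i)

lemma comp_mem_DK {m : Fin n → ℕ} {w : Fin N → Fin n} (hw : w ∈ DK n N m)
    {π : Fin N → Fin N} (hπ : Function.Bijective π) : w ∘ π ∈ DK n N m := by
  rw [DK, mem_filter] at hw ⊢
  refine ⟨mem_univ _, fun b => ?_⟩
  rw [← hw.2 b]
  apply Finset.card_bij (fun s _ => π s)
  · intro a ha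
    rw [mem_filter] at ha ⊢
    exact ⟨mem_univ _, ha.2⟩
  · intro a _ a' _ hab
    exact hπ.1 hab
  · intro b' hb'
    obtain ⟨a, ha⟩ := hπ.2 b'
    rw [mem_filter] at hb'
    exact ⟨a, mem_filter.2 ⟨mem_univ _, by show w (π a) = b; rw [ha]; exact hb'.2⟩, ha⟩

lemma G1_props {i : Fin n} {S : Finset (Fin N)} {w : Fin N → Fin n} {g : Fin N → Fin N}
    (hg : g ∈ G1 i S w) : (∀ p, p ∉ S → g p = p) ∧
    (∀ a ∈ S, ∀ b ∈ S, g a = g b → a = b) ∧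
    ∀ s ∈ S, (w s = i → g s = s) ∧ (w s ≠ i → g s ∉ S ∧ w (g s) = i) :=
  (mem_filter.1 hg).2

lemma G2_props {i : Fin n} {S : Finset (Fin N)} {v : Fin N → Fin n} {g : Fin N → Fin N}
    (hg : g ∈ G2 i S v) : (∀ p, p ∉ S → g p = p) ∧
    (∀ a ∈ S, ∀ b ∈ S, g a = g b → a = b) ∧
    ∀ s ∈ S, g s = s ∨ (g s ∉ S ∧ v (g s) ≠ i) :=
  (mem_filter.1 hg).2

lemma G1_hg1 {i : Fin n} {S : Finset (Fin N)} {w : Fin N → Fin n} {g : Fin N → Fin N}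
    (hg : g ∈ G1 i S w) : ∀ s ∈ S, g s = s ∨ g s ∉ S := by
  intro s hs
  by_cases h : w s = i
  · exact Or.inl (((G1_props hg).2.2 s hs).1 h)
  · exact Or.inr (((G1_props hg).2.2 s hs).2 h).1

lemma G2_hg1 {i : Fin n} {S : Finset (Fin N)} {v : Fin N → Fin n} {g : Fin N → Fin N}
    (hg : g ∈ G2 i S v) : ∀ s ∈ S, g s = s ∨ g s ∉ S := by
  intro s hs
  exact ((G2_props hg).2.2 s hs).elim Or.inl (fun h => Or.inr h.1)

lemma fwd {m : Fin n → ℕ} {i : Fin n} {S : Finset (Fin N)} {w : Fin N → Fin n}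
    {g : Fin N → Fin N} (hw : w ∈ DK n N m) (hg : g ∈ G1 i S w) :
    (w ∘ pig S g) ∈ D1 n N m i S ∧ g ∈ G2 i S (w ∘ pig S g) := by
  obtain ⟨hoff, hinj, hcond⟩ := G1_props hg
  have hg1 := G1_hg1 hg
  have hbij := (pig_invol hg1 hinj).bijective
  constructor
  · rw [D1, mem_filter]
    refine ⟨comp_mem_DK hw hbij, fun s hs => ?_⟩
    show w (pig S g s) = i
    rw [pig_mem hs]
    by_cases hws : w s = i
    · rw [(hcond s hs).1 hws]; exact hws
    · exact ((hcond s hs).2 hws).2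
  · rw [G2, mem_filter]
    refine ⟨mem_univ _, hoff, hinj, fun s hs => ?_⟩
    by_cases hws : w s = i
    · exact Or.inl ((hcond s hs).1 hws)
    · refine Or.inr ⟨((hcond s hs).2 hws).1, ?_⟩
      show w (pig S g (g s)) ≠ i
      rw [pig_g hg1 hinj hs]
      exact hws

lemma bwd {m : Fin n → ℕ} {i : Fin n} {S : Finset (Fin N)} {v : Fin N → Fin n}
    {g : Fin N → Fin N} (hv : v ∈ D1 n N m i S) (hg : g ∈ G2 i S v) :
    (v ∘ pig S g) ∈ DK n N m ∧ g ∈ G1 i S (v ∘ pig S g) := by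
  obtain ⟨hoff, hinj, hcond⟩ := G2_props hg
  have hg1 := G2_hg1 hg
  have hbij := (pig_invol hg1 hinj).bijective
  have hvD : v ∈ DK n N m := (mem_filter.1 hv).1
  have hvS : ∀ s ∈ S, v s = i := (mem_filter.1 hv).2
  refine ⟨comp_mem_DK hvD hbij, ?_⟩
  rw [G1, mem_filter]
  refine ⟨mem_univ _, hoff, hinj, fun s hs => ?_⟩
  rcases hcond s hs with h | h
  · constructor
    · intro _; exact h
    · intro hne
      exfalso
      apply hne
      show v (pig S g s) = i
      rw [pig_mem hs, h]
      exact hvS s hs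
  · constructor
    · intro hvi
      exfalso
      apply h.2
      show v (g s) = i
      have : (v ∘ pig S g) s = v (g s) := by rw [Function.comp_apply, pig_mem hs]
      rw [← this]
      exact hvi
    · intro _
      refine ⟨h.1, ?_⟩
      show v (pig S g (g s)) = i
      rw [pig_g hg1 hinj hs]
      exact hvS s hs

lemma key_identity (m : Fin n → ℕ) (i : Fin n) (S : Finset (Fin N))
    (F : (Fin N → Fin n) → (Fin N → Fin N) → ℝ) :
    ∑ w ∈ DK n N m, ∑ g ∈ G1 i S w, F w g
      = ∑ v ∈ D1 n N m i S, ∑ g ∈ G2 i S v, F (v ∘ pig S g) g := by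
  rw [← Finset.sum_sigma (DK n N m) (fun w => G1 i S w) (fun x => F x.1 x.2),
      ← Finset.sum_sigma (D1 n N m i S) (fun v => G2 i S v)
        (fun x => F (x.1 ∘ pig S x.2) x.2)]
  refine Finset.sum_bij'
    (fun x _ => (⟨x.1 ∘ pig S x.2, x.2⟩ : Σ _ : Fin N → Fin n, Fin N → Fin N))
    (fun x _ => (⟨x.1 ∘ pig S x.2, x.2⟩ : Σ _ : Fin N → Fin n, Fin N → Fin N))
    ?_ ?_ ?_ ?_ ?_
  · rintro ⟨w, g⟩ hx
    rw [Finset.mem_sigma] at hx ⊢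
    exact ⟨(fwd hx.1 hx.2).1, (fwd hx.1 hx.2).2⟩
  · rintro ⟨v, g⟩ hx
    rw [Finset.mem_sigma] at hx ⊢
    exact ⟨(bwd hx.1 hx.2).1, (bwd hx.1 hx.2).2⟩
  · rintro ⟨w, g⟩ hx
    rw [Finset.mem_sigma] at hx
    have := comp_pig_invol (G1_hg1 hx.2) (G1_props hx.2).2.1 w
    simp only [this]
  · rintro ⟨v, g⟩ hx
    rw [Finset.mem_sigma] at hx
    have := comp_pig_invol (G2_hg1 hx.2) (G2_props hx.2).2.1 v
    simp only [this]
  · rintro ⟨w, g⟩ hx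
    rw [Finset.mem_sigma] at hx
    have := comp_pig_invol (G1_hg1 hx.2) (G1_props hx.2).2.1 w
    simp only [this]

lemma W_bound (j t : ℕ) {m : Fin n → ℕ} {i : Fin n} {S : Finset (Fin N)}
    (hSt : ∀ s ∈ S, (s : ℕ) < t) {v : Fin N → Fin n} {g : Fin N → Fin N}
    (hv : v ∈ D1 n N m i S) (hg : g ∈ G2 i S v) :
    W j t v ≤ W j t (v ∘ pig S g) + (m i).choose (j + 1) := by
  classical
  have hvD : v ∈ DK n N m := (mem_filter.1 hv).1
  have hvS : ∀ s ∈ S, v s = i := (mem_filter.1 hv).2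
  obtain ⟨hoff, hinj, hcond⟩ := G2_props hg
  have hg1 := G2_hg1 hg
  have hinv := pig_invol hg1 hinj
  rw [W_eq, W_eq]
  have hcnt : ∀ b, b ≠ i → cnt t b v ≤ cnt t b (v ∘ pig S g) := by
    intro b hb
    apply Finset.card_le_card_of_injOn (fun p => pig S g p)
    · intro p hp
      rw [mem_coe, mem_filter] at hp ⊢
      have hpS : p ∉ S := by
        intro hmem
        apply hb
        rw [← hp.2.2]
        exact hvS p hmem
      refine ⟨mem_univ _, ?_, ?_⟩
      · rcases pig_out (g := g) hpS with h | h
        · exact hSt _ h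
        · simp only [h]; exact hp.2.1
      · show v (pig S g (pig S g p)) = b
        rw [hinv p]
        exact hp.2.2
    · intro a _ a' _ h
      exact hinv.injective h
  calc ∑ b, (cnt t b v).choose (j + 1)
      = (cnt t i v).choose (j + 1) + ∑ b ∈ univ.erase i, (cnt t b v).choose (j + 1) :=
        (Finset.add_sum_erase _ _ (mem_univ i)).symm
    _ ≤ (m i).choose (j + 1)
        + ∑ b ∈ univ.erase i, (cnt t b (v ∘ pig S g)).choose (j + 1) := by
        apply Nat.add_le_add
        · apply Nat.choose_le_choose
          rw [← (mem_filter.1 hvD).2 i]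
          apply card_le_card
          intro s hs
          rw [mem_filter] at hs ⊢
          exact ⟨mem_univ _, hs.2.2⟩
        · apply Finset.sum_le_sum
          intro b hb
          exact Nat.choose_le_choose _ (hcnt b (Finset.ne_of_mem_erase hb))
    _ ≤ (m i).choose (j + 1) + ∑ b, (cnt t b (v ∘ pig S g)).choose (j + 1) := by
        apply Nat.add_le_add_left
        apply Finset.sum_le_sum_of_subset (Finset.erase_subset _ _)
    _ = ∑ b, (cnt t b (v ∘ pig S g)).choose (j + 1) + (m i).choose (j + 1) :=
        Nat.add_comm _ _

/-! ### The weights -/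

def rr (mi j a : ℕ) : ℕ := (mi + a - (j + 1)).descFactorial a

noncomputable def rho (mi j : ℕ) (S : Finset (Fin N)) (g : Fin N → Fin N) : ℝ :=
  ((rr mi j (S.filter fun s => g s ≠ s).card : ℕ) : ℝ)⁻¹

lemma rho_nonneg (mi j : ℕ) (S : Finset (Fin N)) (g : Fin N → Fin N) :
    0 ≤ rho mi j S g :=
  inv_nonneg.2 (Nat.cast_nonneg _)

noncomputable def KK (N mi j : ℕ) (S : Finset (Fin N)) : ℝ :=
  ∑ B ∈ S.powerset, ((N - mi).descFactorial B.card : ℝ) * ((rr mi j B.card : ℕ) : ℝ)⁻¹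

lemma sum_rho_G1 {m : Fin n → ℕ} {i : Fin n} {S : Finset (Fin N)} {j : ℕ}
    {w : Fin N → Fin n} (hS : S.card = j + 1) (hmi : j + 1 ≤ m i) (hw : w ∈ DK n N m) :
    ∑ g ∈ G1 i S w, rho (m i) j S g = 1 := by
  classical
  have hG : G1 i S w
      = MF (S.filter fun s => w s ≠ i) (univ.filter fun p => p ∉ S ∧ w p = i) := by
    ext g
    simp only [G1, MF, mem_filter, mem_univ, true_and]
    constructor
    · rintro ⟨hoff, hinj, hcond⟩
      refine ⟨?_, ?_, ?_⟩
      · intro p hp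
        by_cases hpS : p ∈ S
        · have hwp : w p = i := by
            by_contra hne
            exact hp ⟨hpS, hne⟩
          exact (hcond p hpS).1 hwp
        · exact hoff p hpS
      · intro s hs
        exact (hcond s hs.1).2 hs.2
      · intro a ha b hb
        exact hinj a ha.1 b hb.1
    · rintro ⟨hoff, hmaps, hinj⟩
      refine ⟨fun p hp => hoff p (fun hmem => hp hmem.1), ?_, ?_⟩
      · intro a ha b hb hab
        by_cases hwa : w a = i
        · have hga : g a = a := hoff a (fun hmem => hmem.2 hwa)
          by_cases hwb : w b = i
          · have hgb : g b = b := hoff b (fun hmem => hmem.2 hwb)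
            rw [hga, hgb] at hab
            exact hab
          · exfalso
            rw [hga] at hab
            apply (hmaps b ⟨hb, hwb⟩).1
            rw [← hab]
            exact ha
        · by_cases hwb : w b = i
          · exfalso
            have hgb : g b = b := hoff b (fun hmem => hmem.2 hwb)
            rw [hgb] at hab
            apply (hmaps a ⟨ha, hwa⟩).1
            rw [hab]
            exact hb
          · exact hinj a ⟨ha, hwa⟩ b ⟨hb, hwb⟩ hab
      · intro s hs
        exact ⟨fun hws => hoff s (fun hmem => hmem.2 hws), fun hws => hmaps s ⟨hs, hws⟩⟩
  rw [hG]
  have hconst : ∀ g ∈ MF (S.filter fun s => w s ≠ i)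
      (univ.filter fun p => p ∉ S ∧ w p = i),
      (S.filter fun s => g s ≠ s) = S.filter fun s => w s ≠ i := by
    intro g hg
    obtain ⟨hoff, hmaps, hinj⟩ := (mem_filter.1 hg).2
    ext s
    simp only [mem_filter]
    constructor
    · rintro ⟨hsS, hgs⟩
      refine ⟨hsS, fun hws => hgs (hoff s (fun hmem => (mem_filter.1 hmem).2 hws))⟩
    · rintro ⟨hsS, hws⟩
      refine ⟨hsS, fun hgs => ?_⟩
      have h := hmaps s (mem_filter.2 ⟨hsS, hws⟩)
      rw [mem_filter] at h
      apply h.2.1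
      rw [hgs]
      exact hsS
  rw [Finset.sum_congr rfl (fun g hg => by rw [rho, hconst g hg]), Finset.sum_const, MF_card]
  have hA_le : (S.filter fun s => w s ≠ i).card ≤ j + 1 :=
    hS ▸ card_le_card (filter_subset _ _)
  have hPcard : (univ.filter fun p : Fin N => p ∉ S ∧ w p = i).card
      = m i + (S.filter fun s => w s ≠ i).card - (j + 1) := by
    have h1 : (univ.filter fun p : Fin N => w p = i).card = m i := (mem_filter.1 hw).2 i
    have h2 := Finset.card_filter_add_card_filter_not
      (s := univ.filter fun p : Fin N => w p = i) (p := fun p => p ∈ S)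
    rw [filter_filter, filter_filter] at h2
    have h3 : univ.filter (fun p : Fin N => w p = i ∧ p ∈ S) = S.filter fun s => w s = i := by
      ext p
      simp only [mem_filter, mem_univ, true_and, and_comm]
    have h4 : univ.filter (fun p : Fin N => w p = i ∧ ¬ p ∈ S)
        = univ.filter fun p : Fin N => p ∉ S ∧ w p = i := by
      ext p
      simp only [mem_filter, mem_univ, true_and, and_comm]
    rw [h3, h4, h1] at h2
    have h5 : (S.filter fun s => w s ≠ i).card + (S.filter fun s => w s = i).card = j + 1 := by
      rw [← hS]
      have h6 := Finset.card_filter_add_card_filter_not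
        (s := S) (p := fun s => w s = i)
      have h7 : (S.filter fun s => ¬ w s = i) = S.filter fun s => w s ≠ i := rfl
      rw [h7] at h6
      omega
    omega
  have hrr : rr (m i) j (S.filter fun s => w s ≠ i).card ≠ 0 := by
    rw [rr]
    intro h
    rw [Nat.descFactorial_eq_zero_iff_lt] at h
    omega
  have heq : (univ.filter fun p : Fin N => p ∉ S ∧ w p = i).card.descFactorial
      (S.filter fun s => w s ≠ i).card = rr (m i) j (S.filter fun s => w s ≠ i).card := by
    rw [rr, hPcard]
  rw [heq, nsmul_eq_mul, mul_inv_cancel₀ (Nat.cast_ne_zero.2 hrr)]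

lemma sum_rho_G2 {m : Fin n → ℕ} {i : Fin n} {S : Finset (Fin N)} {j : ℕ}
    {v : Fin N → Fin n} (hv : v ∈ D1 n N m i S) :
    ∑ g ∈ G2 i S v, rho (m i) j S g = KK N (m i) j S := by
  classical
  have hvD : v ∈ DK n N m := (mem_filter.1 hv).1
  have hvS : ∀ s ∈ S, v s = i := (mem_filter.1 hv).2
  have hpart : G2 i S v
      = S.powerset.biUnion (fun B => MF B (univ.filter fun p => v p ≠ i)) := by
    ext g
    simp only [mem_biUnion, mem_powerset]
    constructor
    · intro hg
      obtain ⟨hoff, hinj, hcond⟩ := G2_props hg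
      refine ⟨S.filter (fun s => g s ≠ s), filter_subset _ _, ?_⟩
      rw [MF, mem_filter]
      refine ⟨mem_univ _, ?_, ?_, ?_⟩
      · intro p hp
        by_cases hpS : p ∈ S
        · by_contra hne
          exact hp (mem_filter.2 ⟨hpS, hne⟩)
        · exact hoff p hpS
      · intro s hs
        rw [mem_filter] at hs
        rcases hcond s hs.1 with h | h
        · exact absurd h hs.2
        · exact mem_filter.2 ⟨mem_univ _, h.2⟩
      · intro a ha b hb
        rw [mem_filter] at ha hb
        exact hinj a ha.1 b hb.1
    · rintro ⟨B, hBS, hg⟩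
      obtain ⟨hoff, hmaps, hinj⟩ := (mem_filter.1 hg).2
      have hTS : ∀ s ∈ B, g s ∉ S := by
        intro s hs hmem
        have h := hmaps s hs
        rw [mem_filter] at h
        exact h.2 (hvS _ hmem)
      rw [G2, mem_filter]
      refine ⟨mem_univ _, fun p hp => hoff p (fun hmem => hp (hBS hmem)), ?_, ?_⟩
      · intro a ha b hb hab
        by_cases haB : a ∈ B
        · by_cases hbB : b ∈ B
          · exact hinj a haB b hbB hab
          · exfalso
            rw [hoff b hbB] at hab
            apply hTS a haB
            rw [hab]
            exact hb
        · by_cases hbB : b ∈ B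
          · exfalso
            rw [hoff a haB] at hab
            apply hTS b hbB
            rw [← hab]
            exact ha
          · rw [hoff a haB, hoff b hbB] at hab
            exact hab
      · intro s hs
        by_cases hsB : s ∈ B
        · right
          have h := hmaps s hsB
          rw [mem_filter] at h
          exact ⟨hTS s hsB, h.2⟩
        · left
          exact hoff s hsB
  have hsub : ∀ B1 : Finset (Fin N), B1 ⊆ S → ∀ B2 : Finset (Fin N), ∀ g : Fin N → Fin N,
      g ∈ MF B1 (univ.filter fun p => v p ≠ i) →
      g ∈ MF B2 (univ.filter fun p => v p ≠ i) → B1 ⊆ B2 := by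
    intro B1 hB1 B2 g hg1 hg2 s hs
    obtain ⟨ho1, hm1, _⟩ := (mem_filter.1 hg1).2
    obtain ⟨ho2, hm2, _⟩ := (mem_filter.1 hg2).2
    by_contra hs2
    have hgs := hm1 s hs
    rw [mem_filter] at hgs
    rw [ho2 s hs2] at hgs
    exact hgs.2 (hvS s (hB1 hs))
  rw [hpart, Finset.sum_biUnion]
  swap
  · intro B1 h1 B2 h2 hne
    simp only [Function.onFun]
    rw [Finset.disjoint_left]
    intro g hg1 hg2
    apply hne
    exact Finset.Subset.antisymm
      (hsub B1 (mem_powerset.1 (Finset.mem_coe.1 h1)) B2 g hg1 hg2)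
      (hsub B2 (mem_powerset.1 (Finset.mem_coe.1 h2)) B1 g hg2 hg1)
  rw [KK]
  refine Finset.sum_congr rfl ?_
  intro B hB
  rw [mem_powerset] at hB
  have hconst : ∀ g ∈ MF B (univ.filter fun p => v p ≠ i),
      (S.filter fun s => g s ≠ s) = B := by
    intro g hg
    obtain ⟨hoff, hmaps, _⟩ := (mem_filter.1 hg).2
    ext s
    simp only [mem_filter]
    constructor
    · rintro ⟨hsS, hgs⟩
      by_contra hsB
      exact hgs (hoff s hsB)
    · intro hsB
      refine ⟨hB hsB, ?_⟩
      have h := hmaps s hsB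
      rw [mem_filter] at h
      intro hgs
      rw [hgs] at h
      exact h.2 (hvS s (hB hsB))
  rw [Finset.sum_congr rfl (fun g hg => by rw [rho, hconst g hg]), Finset.sum_const, MF_card,
    nsmul_eq_mul]
  have hTv : (univ.filter fun p : Fin N => v p ≠ i).card = N - m i := by
    have h1 : (univ.filter fun p : Fin N => v p = i).card = m i := (mem_filter.1 hvD).2 i
    have h2 := Finset.card_filter_add_card_filter_not
      (s := (univ : Finset (Fin N))) (p := fun p => v p = i)
    have h3 : (univ.filter fun p : Fin N => ¬ v p = i) = univ.filter fun p : Fin N => v p ≠ i :=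
      rfl
    rw [h1, h3, card_univ, Fintype.card_fin] at h2
    omega
  rw [hTv]

lemma key_ineq (j t : ℕ) {m : Fin n → ℕ} (i : Fin n) {S : Finset (Fin N)}
    (hS : S.card = j + 1) (hSt : ∀ s ∈ S, (s : ℕ) < t) {θ : ℝ} (hθ : 0 ≤ θ)
    {c : ℕ} (hci : (m i).choose (j + 1) ≤ c) :
    ((D1 n N m i S).card : ℝ) * Real.exp (-(θ * c))
        * ∑ w ∈ DK n N m, Real.exp (-(θ * (W j t w : ℝ)))
      ≤ ((DK n N m).card : ℝ) * ∑ v ∈ D1 n N m i S, Real.exp (-(θ * (W j t v : ℝ))) := by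
  classical
  by_cases hmi : j + 1 ≤ m i
  case neg =>
    have hD1 : D1 n N m i S = ∅ := by
      rw [Finset.eq_empty_iff_forall_notMem]
      intro v hv
      have hvD := (mem_filter.1 hv).1
      have hvS := (mem_filter.1 hv).2
      apply hmi
      calc j + 1 = S.card := hS.symm
        _ ≤ (univ.filter fun s : Fin N => v s = i).card :=
            card_le_card (fun s hs => mem_filter.2 ⟨mem_univ _, hvS s hs⟩)
        _ = m i := (mem_filter.1 hvD).2 i
    rw [hD1]
    simp only [card_empty, Nat.cast_zero, zero_mul, Finset.sum_empty, mul_zero, le_refl]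
  case pos =>
    have h0 : ((DK n N m).card : ℝ) = KK N (m i) j S * ((D1 n N m i S).card : ℝ) := by
      have hid := key_identity (N := N) m i S (fun _ g => rho (m i) j S g)
      rw [Finset.sum_congr rfl (fun w hw => sum_rho_G1 hS hmi hw),
        Finset.sum_congr rfl (fun v hv => sum_rho_G2 (j := j) hv),
        Finset.sum_const, Finset.sum_const, nsmul_eq_mul, nsmul_eq_mul, mul_one] at hid
      rw [hid, mul_comm]
    have h4 : ∑ w ∈ DK n N m, Real.exp (-(θ * (W j t w : ℝ)))
        ≤ Real.exp (θ * c) * KK N (m i) j S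
          * ∑ v ∈ D1 n N m i S, Real.exp (-(θ * (W j t v : ℝ))) := by
      have hid := key_identity (N := N) m i S
        (fun w g => rho (m i) j S g * Real.exp (-(θ * (W j t w : ℝ))))
      have hL : ∀ w ∈ DK n N m,
          ∑ g ∈ G1 i S w, rho (m i) j S g * Real.exp (-(θ * (W j t w : ℝ)))
            = Real.exp (-(θ * (W j t w : ℝ))) := by
        intro w hw
        rw [← Finset.sum_mul, sum_rho_G1 hS hmi hw, one_mul]
      rw [Finset.sum_congr rfl hL] at hid
      rw [hid]
      have hR : ∀ v ∈ D1 n N m i S,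
          ∑ g ∈ G2 i S v, rho (m i) j S g * Real.exp (-(θ * (W j t (v ∘ pig S g) : ℝ)))
            ≤ KK N (m i) j S * (Real.exp (θ * c) * Real.exp (-(θ * (W j t v : ℝ)))) := by
        intro v hv
        calc ∑ g ∈ G2 i S v, rho (m i) j S g * Real.exp (-(θ * (W j t (v ∘ pig S g) : ℝ)))
            ≤ ∑ g ∈ G2 i S v, rho (m i) j S g
                * (Real.exp (θ * c) * Real.exp (-(θ * (W j t v : ℝ)))) := by
              apply Finset.sum_le_sum
              intro g hg
              apply mul_le_mul_of_nonneg_left ?_ (rho_nonneg _ _ _ _)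
              rw [← Real.exp_add, Real.exp_le_exp]
              have hWb : (W j t v : ℝ) ≤ (W j t (v ∘ pig S g) : ℝ) + (c : ℝ) := by
                have hb := W_bound j t hSt hv hg
                have hb2 : W j t v ≤ W j t (v ∘ pig S g) + c := le_trans hb (by omega)
                exact_mod_cast hb2
              nlinarith [mul_le_mul_of_nonneg_left hWb hθ]
          _ = (∑ g ∈ G2 i S v, rho (m i) j S g)
                * (Real.exp (θ * c) * Real.exp (-(θ * (W j t v : ℝ)))) :=
              (Finset.sum_mul _ _ _).symm
          _ = KK N (m i) j S * (Real.exp (θ * c) * Real.exp (-(θ * (W j t v : ℝ)))) := by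
              rw [sum_rho_G2 (j := j) hv]
      calc ∑ v ∈ D1 n N m i S,
            ∑ g ∈ G2 i S v, rho (m i) j S g * Real.exp (-(θ * (W j t (v ∘ pig S g) : ℝ)))
          ≤ ∑ v ∈ D1 n N m i S,
              KK N (m i) j S * (Real.exp (θ * c) * Real.exp (-(θ * (W j t v : ℝ)))) :=
            Finset.sum_le_sum hR
        _ = Real.exp (θ * c) * KK N (m i) j S
              * ∑ v ∈ D1 n N m i S, Real.exp (-(θ * (W j t v : ℝ))) := by
            rw [← Finset.mul_sum, ← Finset.mul_sum]
            ring
    calc ((D1 n N m i S).card : ℝ) * Real.exp (-(θ * c))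
          * ∑ w ∈ DK n N m, Real.exp (-(θ * (W j t w : ℝ)))
        ≤ ((D1 n N m i S).card : ℝ) * Real.exp (-(θ * c))
            * (Real.exp (θ * c) * KK N (m i) j S
              * ∑ v ∈ D1 n N m i S, Real.exp (-(θ * (W j t v : ℝ)))) := by
          apply mul_le_mul_of_nonneg_left h4 (by positivity)
      _ = (KK N (m i) j S * ((D1 n N m i S).card : ℝ))
            * (∑ v ∈ D1 n N m i S, Real.exp (-(θ * (W j t v : ℝ))))
            * (Real.exp (-(θ * c)) * Real.exp (θ * c)) := by ring
      _ = ((DK n N m).card : ℝ)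
            * ∑ v ∈ D1 n N m i S, Real.exp (-(θ * (W j t v : ℝ))) := by
          rw [← Real.exp_add, neg_add_cancel, Real.exp_zero, mul_one, ← h0]



/-! ### The master inequality -/

def SS (N j t : ℕ) : Finset (Finset (Fin N)) :=
  (Finset.univ.powersetCard (j + 1)).filter fun S => ∀ s ∈ S, (s : ℕ) < t

lemma W_count (j t : ℕ) (w : Fin N → Fin n) :
    W j t w = ∑ S ∈ SS N j t, ∑ i : Fin n, (if ∀ s ∈ S, w s = i then 1 else 0) := by
  classical
  have h1 : (Finset.univ.powersetCard (j + 1)).filter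
        (fun S : Finset (Fin N) => (∀ s ∈ S, (s : ℕ) < t) ∧ ∃ i, ∀ s ∈ S, w s = i)
      = (SS N j t).filter (fun S => ∃ i, ∀ s ∈ S, w s = i) := by
    rw [SS, filter_filter]
  rw [W, h1, Finset.card_filter]
  apply Finset.sum_congr rfl
  intro S hS
  rw [SS, mem_filter, mem_powersetCard] at hS
  have hSne : S.Nonempty := card_pos.1 (by rw [hS.1.2]; omega)
  obtain ⟨s0, hs0⟩ := hSne
  by_cases hex : ∃ i, ∀ s ∈ S, w s = i
  · rw [if_pos hex]
    obtain ⟨i0, hi0⟩ := hex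
    have hpt : ∀ i : Fin n, (if ∀ s ∈ S, w s = i then 1 else 0)
        = if i = i0 then 1 else 0 := by
      intro i
      by_cases h : ∀ s ∈ S, w s = i
      · rw [if_pos h, if_pos ((h s0 hs0).symm.trans (hi0 s0 hs0))]
      · rw [if_neg h, if_neg]
        intro he
        apply h
        intro s hs
        rw [he]
        exact hi0 s hs
    rw [Finset.sum_congr rfl (fun i _ => hpt i), Finset.sum_ite_eq' univ i0 (fun _ => 1),
      if_pos (mem_univ i0)]
  · rw [if_neg hex]
    symm
    apply Finset.sum_eq_zero
    intro i _
    rw [if_neg (fun h => hex ⟨i, h⟩)]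

lemma W_decomp (j t : ℕ) (m : Fin n → ℕ) (φ : (Fin N → Fin n) → ℝ) :
    ∑ w ∈ DK n N m, (W j t w : ℝ) * φ w
      = ∑ S ∈ SS N j t, ∑ i : Fin n, ∑ v ∈ D1 n N m i S, φ v := by
  classical
  calc ∑ w ∈ DK n N m, (W j t w : ℝ) * φ w
      = ∑ w ∈ DK n N m, ∑ S ∈ SS N j t, ∑ i : Fin n,
          (if ∀ s ∈ S, w s = i then φ w else 0) := by
        apply Finset.sum_congr rfl
        intro w _
        rw [W_count j t w]
        push_cast
        rw [Finset.sum_mul]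
        apply Finset.sum_congr rfl
        intro S _
        rw [Finset.sum_mul]
        apply Finset.sum_congr rfl
        intro i _
        rw [ite_mul, one_mul, zero_mul]
    _ = ∑ S ∈ SS N j t, ∑ i : Fin n, ∑ w ∈ DK n N m,
          (if ∀ s ∈ S, w s = i then φ w else 0) := by
        rw [Finset.sum_comm]
        apply Finset.sum_congr rfl
        intro S _
        rw [Finset.sum_comm]
    _ = ∑ S ∈ SS N j t, ∑ i : Fin n, ∑ v ∈ D1 n N m i S, φ v := by
        apply Finset.sum_congr rfl
        intro S _
        apply Finset.sum_congr rfl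
        intro i _
        rw [D1, Finset.sum_filter]

lemma master (j t : ℕ) (m : Fin n → ℕ) {θ : ℝ} (hθ : 0 ≤ θ) {c : ℕ}
    (hc : ∀ i, (m i).choose (j + 1) ≤ c) :
    Real.exp (-(θ * c)) * (∑ w ∈ DK n N m, (W j t w : ℝ))
        * ∑ w ∈ DK n N m, Real.exp (-(θ * (W j t w : ℝ)))
      ≤ ((DK n N m).card : ℝ)
        * ∑ w ∈ DK n N m, (W j t w : ℝ) * Real.exp (-(θ * (W j t w : ℝ))) := by
  classical
  have hsum1 : ∑ w ∈ DK n N m, (W j t w : ℝ)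
      = ∑ S ∈ SS N j t, ∑ i : Fin n, ((D1 n N m i S).card : ℝ) := by
    have h := W_decomp (N := N) j t m (fun _ => (1 : ℝ))
    simp only [mul_one] at h
    rw [h]
    apply Finset.sum_congr rfl
    intro S _
    apply Finset.sum_congr rfl
    intro i _
    rw [Finset.sum_const, nsmul_eq_mul, mul_one]
  calc Real.exp (-(θ * c)) * (∑ w ∈ DK n N m, (W j t w : ℝ))
        * ∑ w ∈ DK n N m, Real.exp (-(θ * (W j t w : ℝ)))
      = ∑ S ∈ SS N j t, ∑ i : Fin n, ((D1 n N m i S).card : ℝ) * Real.exp (-(θ * c))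
          * ∑ w ∈ DK n N m, Real.exp (-(θ * (W j t w : ℝ))) := by
        rw [hsum1]
        simp only [Finset.sum_mul, Finset.mul_sum]
        rw [Finset.sum_comm]
        apply Finset.sum_congr rfl
        intro S _
        rw [Finset.sum_comm]
        apply Finset.sum_congr rfl
        intro i _
        apply Finset.sum_congr rfl
        intro w _
        ring
    _ ≤ ∑ S ∈ SS N j t, ∑ i : Fin n, ((DK n N m).card : ℝ)
          * ∑ v ∈ D1 n N m i S, Real.exp (-(θ * (W j t v : ℝ))) := by
        apply Finset.sum_le_sum
        intro S hS
        apply Finset.sum_le_sum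
        intro i _
        rw [SS, mem_filter, mem_powersetCard] at hS
        exact key_ineq j t i hS.1.2 hS.2 hθ (hc i)
    _ = ((DK n N m).card : ℝ)
          * ∑ w ∈ DK n N m, (W j t w : ℝ) * Real.exp (-(θ * (W j t w : ℝ))) := by
        rw [W_decomp (N := N) j t m (fun w => Real.exp (-(θ * (W j t w : ℝ))))]
        simp only [Finset.mul_sum]

/-! ### Analysis lemmas -/

lemma exp_quad {u : ℝ} (hu : 0 ≤ u) : u - u ^ 2 / 2 ≤ 1 - Real.exp (-u) := by
  have H : ∀ y : ℝ, HasDerivAt (fun y : ℝ => 1 - Real.exp (-y) - y + y ^ 2 / 2)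
      (Real.exp (-y) - 1 + y) y := by
    intro y
    have h1 : HasDerivAt (fun y : ℝ => -y) (-1) y := (hasDerivAt_id y).neg
    have h2 := h1.exp
    have h3 : HasDerivAt (fun y : ℝ => y ^ 2 / 2) y y := by
      have := (hasDerivAt_pow 2 y).div_const 2
      simpa using this
    have h4 := (((hasDerivAt_const y (1 : ℝ)).sub h2).sub (hasDerivAt_id y)).add h3
    refine h4.congr_deriv ?_
    ring
  have hmono : MonotoneOn (fun y : ℝ => 1 - Real.exp (-y) - y + y ^ 2 / 2) (Set.Ici 0) := by
    apply monotoneOn_of_deriv_nonneg (convex_Ici 0)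
    · exact Continuous.continuousOn
        (continuous_iff_continuousAt.2 fun y => (H y).continuousAt)
    · intro y _
      exact (H y).differentiableAt.differentiableWithinAt
    · intro y _
      rw [(H y).deriv]
      have := Real.add_one_le_exp (-y)
      linarith
  have h0 := hmono Set.self_mem_Ici (Set.mem_Ici.2 hu) hu
  norm_num [Real.exp_zero] at h0
  linarith

end TjAux

/-- Lemma: size-bias tail bound for `T_j`.
For a deck with multiplicities `m`, `1 ≤ j ≤ m* − 1`, `1 ≤ t ≤ N`, `c = C(m*, j+1)`, and
every real `0 ≤ x < E[W_j(t)]`: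
`P(T_j ≥ t) ≤ exp(−x²/(2c·E[W_j(t)]))`. -/
theorem Tj_tail_bound (n : ℕ) (m : Fin n → ℕ) (j t : ℕ)
    (hj1 : 1 ≤ j) (hj2 : j + 1 ≤ Finset.univ.sup m)
    (ht1 : 1 ≤ t) (ht2 : t ≤ ∑ i, m i)
    (x : ℝ) (hx0 : 0 ≤ x) (hx : x < expect n m (fun w => (W j t w : ℝ))) :
    pr n m (fun w => t ≤ T j w) ≤
      Real.exp (-(x ^ 2 /
        (2 * (((Finset.univ.sup m).choose (j + 1) : ℕ) : ℝ) *
          expect n m (fun w => (W j t w : ℝ))))) := by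
  classical
  have hDK : TjAux.DK n (∑ i, m i) m = decks n m := rfl
  by_cases hD : (decks n m).card = 0
  · exfalso
    have hz : expect n m (fun w => (W j t w : ℝ)) = 0 := by
      simp only [_root_.expect, hD, Nat.cast_zero, div_zero]
    rw [hz] at hx
    linarith
  have hDpos : 0 < (decks n m).card := Nat.pos_of_ne_zero hD
  have hDne : (0 : ℝ) < ((decks n m).card : ℝ) := by exact_mod_cast hDpos
  have hDnon : (decks n m).Nonempty := Finset.card_pos.1 hDpos
  set μ := expect n m (fun w => (W j t w : ℝ)) with hμ
  have hμpos : 0 < μ := lt_of_le_of_lt hx0 hx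
  set c : ℕ := (Finset.univ.sup m).choose (j + 1) with hcdef
  have hcpos : 0 < c := Nat.choose_pos hj2
  have hcR : (0 : ℝ) < (c : ℝ) := by exact_mod_cast hcpos
  have hcm : ∀ i, (m i).choose (j + 1) ≤ c :=
    fun i => Nat.choose_le_choose _ (Finset.le_sup (Finset.mem_univ i))
  set θ := x / (c * μ) with hθdef
  have hθ : 0 ≤ θ := div_nonneg hx0 (by positivity)
  set f : ℝ → ℝ := fun y => ∑ w ∈ decks n m, Real.exp (-(y * (W j t w : ℝ))) with hf
  have hfpos : ∀ y, 0 < f y :=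
    fun y => Finset.sum_pos (fun w _ => Real.exp_pos _) hDnon
  have hfD : ∀ y : ℝ, HasDerivAt f
      (-∑ w ∈ decks n m, (W j t w : ℝ) * Real.exp (-(y * (W j t w : ℝ)))) y := by
    intro y
    have h := HasDerivAt.fun_sum (u := decks n m)
      (A := fun w y => Real.exp (-(y * (W j t w : ℝ))))
      (A' := fun w => Real.exp (-(y * (W j t w : ℝ))) * -(1 * (W j t w : ℝ)))
      (fun w _ => ((hasDerivAt_id y).mul_const ((W j t w : ℝ))).neg.exp)
    refine h.congr_deriv ?_
    rw [← Finset.sum_neg_distrib]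
    apply Finset.sum_congr rfl
    intro w _
    ring
  have hTot : ∑ w ∈ decks n m, (W j t w : ℝ) = μ * ((decks n m).card : ℝ) := by
    rw [hμ]
    simp only [_root_.expect]
    rw [div_mul_cancel₀ _ hDne.ne']
  have hmaster : ∀ y : ℝ, 0 ≤ y →
      Real.exp (-(y * (c : ℝ))) * μ * f y
        ≤ ∑ w ∈ decks n m, (W j t w : ℝ) * Real.exp (-(y * (W j t w : ℝ))) := by
    intro y hy
    have h := TjAux.master (n := n) (N := ∑ i, m i) j t m hy hcm
    rw [hDK, hTot] at h
    have h2 : ((decks n m).card : ℝ) * (Real.exp (-(y * (c : ℝ))) * μ * f y)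
        ≤ ((decks n m).card : ℝ)
          * ∑ w ∈ decks n m, (W j t w : ℝ) * Real.exp (-(y * (W j t w : ℝ))) := by
      calc ((decks n m).card : ℝ) * (Real.exp (-(y * (c : ℝ))) * μ * f y)
          = Real.exp (-(y * (c : ℝ))) * (μ * ((decks n m).card : ℝ)) * f y := by ring
        _ ≤ _ := h
    exact (mul_le_mul_iff_right₀ hDne).1 h2
  set φ : ℝ → ℝ := fun y => Real.log (f y)
    + (μ / c) * (1 - Real.exp (-(y * (c : ℝ)))) with hφ
  have hφD : ∀ y : ℝ, HasDerivAt φ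
      ((-∑ w ∈ decks n m, (W j t w : ℝ) * Real.exp (-(y * (W j t w : ℝ)))) / f y
        + (μ / c) * (Real.exp (-(y * (c : ℝ))) * (c : ℝ))) y := by
    intro y
    apply HasDerivAt.add
    · exact (hfD y).log (hfpos y).ne'
    · have h1 : HasDerivAt (fun y : ℝ => 1 - Real.exp (-(y * (c : ℝ))))
          (Real.exp (-(y * (c : ℝ))) * (c : ℝ)) y := by
        have h2 : HasDerivAt (fun z : ℝ => Real.exp (-(z * (c : ℝ))))
            (Real.exp (-(y * (c : ℝ))) * -(c : ℝ)) y := by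
          simpa using ((hasDerivAt_id y).mul_const ((c : ℝ))).neg.exp
        have h3 := (hasDerivAt_const y (1 : ℝ)).sub h2
        refine h3.congr_deriv ?_
        ring
      exact h1.const_mul (μ / c)
  have hanti : AntitoneOn φ (Set.Ici 0) := by
    apply antitoneOn_of_deriv_nonpos (convex_Ici 0)
    · exact Continuous.continuousOn
        (continuous_iff_continuousAt.2 fun y => (hφD y).continuousAt)
    · intro y _
      exact (hφD y).differentiableAt.differentiableWithinAt
    · intro y hy
      rw [interior_Ici] at hy
      rw [(hφD y).deriv]
      have hy0 : (0 : ℝ) ≤ y := le_of_lt hy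
      have hm := hmaster y hy0
      have hfp := hfpos y
      have hμc : (μ / c) * (Real.exp (-(y * (c : ℝ))) * (c : ℝ))
          = μ * Real.exp (-(y * (c : ℝ))) := by
        field_simp
        try ring
      rw [hμc]
      have key : -(∑ w ∈ decks n m, (W j t w : ℝ) * Real.exp (-(y * (W j t w : ℝ))))
          + μ * Real.exp (-(y * (c : ℝ))) * f y ≤ 0 := by nlinarith [hm]
      have hre : (-∑ w ∈ decks n m, (W j t w : ℝ) * Real.exp (-(y * (W j t w : ℝ)))) / f y
          + μ * Real.exp (-(y * (c : ℝ)))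
          = (-(∑ w ∈ decks n m, (W j t w : ℝ) * Real.exp (-(y * (W j t w : ℝ))))
              + μ * Real.exp (-(y * (c : ℝ))) * f y) / f y := by
        rw [div_add' _ _ _ hfp.ne']
      rw [hre]
      exact div_nonpos_of_nonpos_of_nonneg key hfp.le
  have hφ0 : φ 0 = Real.log ((decks n m).card : ℝ) := by
    have hf0 : f 0 = ((decks n m).card : ℝ) := by
      rw [hf]
      simp [Real.exp_zero]
    rw [hφ]
    simp only [zero_mul, neg_zero, Real.exp_zero, sub_self, mul_zero, add_zero, hf0]
  have hmain := hanti Set.self_mem_Ici (Set.mem_Ici.2 hθ) hθ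
  rw [hφ0] at hmain
  have hfb : f θ ≤ ((decks n m).card : ℝ)
      * Real.exp (-((μ / c) * (1 - Real.exp (-(θ * (c : ℝ)))))) := by
    have h1 : Real.log (f θ) ≤ Real.log ((decks n m).card : ℝ)
        - (μ / c) * (1 - Real.exp (-(θ * (c : ℝ)))) := by
      have h2 : Real.log (f θ) + (μ / c) * (1 - Real.exp (-(θ * (c : ℝ))))
          ≤ Real.log ((decks n m).card : ℝ) := hmain
      linarith
    calc f θ = Real.exp (Real.log (f θ)) := (Real.exp_log (hfpos θ)).symm
      _ ≤ Real.exp (Real.log ((decks n m).card : ℝ)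
          - (μ / c) * (1 - Real.exp (-(θ * (c : ℝ))))) := Real.exp_le_exp.2 h1
      _ = ((decks n m).card : ℝ)
          * Real.exp (-((μ / c) * (1 - Real.exp (-(θ * (c : ℝ)))))) := by
        rw [Real.exp_sub, Real.exp_log hDne]
        rw [div_eq_mul_inv, ← Real.exp_neg]
  have hnum : (((decks n m).filter fun w => W j t w = 0).card : ℝ) ≤ f θ := by
    have hone : ∀ w ∈ (decks n m).filter fun w => W j t w = 0,
        Real.exp (-(θ * (W j t w : ℝ))) = 1 := by
      intro w hw
      rw [(Finset.mem_filter.1 hw).2]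
      norm_num
    calc (((decks n m).filter fun w => W j t w = 0).card : ℝ)
        = ∑ w ∈ (decks n m).filter fun w => W j t w = 0,
            Real.exp (-(θ * (W j t w : ℝ))) := by
          rw [Finset.sum_congr rfl hone, Finset.sum_const, nsmul_eq_mul, mul_one]
      _ ≤ f θ := Finset.sum_le_sum_of_subset_of_nonneg (Finset.filter_subset _ _)
          (fun w _ _ => (Real.exp_pos _).le)
  have hpr : pr n m (fun w => t ≤ T j w) ≤ f θ / ((decks n m).card : ℝ) := by
    rw [pr]
    have hfe : (Finset.filter (fun w => t ≤ T j w) (decks n m))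
        = (decks n m).filter fun w => W j t w = 0 :=
      Finset.filter_congr (fun w _ => TjAux.le_T_iff_W j t w ht2)
    rw [Finset.filter_congr_decidable, hfe]
    exact (div_le_div_iff_of_pos_right hDne).2 hnum
  have hexp : Real.exp (-((μ / c) * (1 - Real.exp (-(θ * (c : ℝ))))))
      ≤ Real.exp (-(x ^ 2 / (2 * (c : ℝ) * μ))) := by
    rw [Real.exp_le_exp, neg_le_neg_iff]
    have hθc : θ * (c : ℝ) = x / μ := by
      rw [hθdef]
      field_simp
    have hq := TjAux.exp_quad (u := θ * (c : ℝ)) (mul_nonneg hθ hcR.le)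
    have e1 : (μ / (c : ℝ)) * (x / μ - (x / μ) ^ 2 / 2)
        = x / (c : ℝ) - x ^ 2 / (2 * (c : ℝ) * μ) := by
      field_simp
    have h2 : x ^ 2 / ((c : ℝ) * μ) ≤ x / (c : ℝ) := by
      rw [div_le_div_iff₀ (by positivity) hcR]
      nlinarith [mul_nonneg (mul_nonneg hcR.le hx0) (sub_nonneg.2 hx.le)]
    calc x ^ 2 / (2 * (c : ℝ) * μ)
        ≤ (μ / (c : ℝ)) * (θ * (c : ℝ) - (θ * (c : ℝ)) ^ 2 / 2) := by
          rw [hθc, e1]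
          have h3 : x ^ 2 / (2 * (c : ℝ) * μ) + x ^ 2 / (2 * (c : ℝ) * μ)
              = x ^ 2 / ((c : ℝ) * μ) := by ring
          linarith
      _ ≤ (μ / (c : ℝ)) * (1 - Real.exp (-(θ * (c : ℝ)))) := by
          apply mul_le_mul_of_nonneg_left hq (by positivity)
  calc pr n m (fun w => t ≤ T j w) ≤ f θ / ((decks n m).card : ℝ) := hpr
    _ ≤ (((decks n m).card : ℝ)
          * Real.exp (-((μ / c) * (1 - Real.exp (-(θ * (c : ℝ)))))))
          / ((decks n m).card : ℝ) := (div_le_div_iff_of_pos_right hDne).2 hfb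
    _ = Real.exp (-((μ / c) * (1 - Real.exp (-(θ * (c : ℝ)))))) := by
        rw [mul_comm, mul_div_assoc, div_self hDne.ne', mul_one]
    _ ≤ Real.exp (-(x ^ 2 / (2 * (c : ℝ) * μ))) := hexp
end

section
/- Let 𝐦 = (m_1,…,m_n) be a vector of multiplicities with n types, let 1 ≤ j ≤ m* = max_i m_i, and let ε > 0. Assume that at least εn of the types have multiplicity at least j, and that m = (Σ_i m_i)/n ≥ ε·m*. Then ε/j^j ≤ β_j ≤ 1/(ε^j · j!), where β_j = (1/n)·Σ_{i=1}^n C(m_i,j)/m^j; in particular β_j = Θ(1) with implicit constants depending only on j and ε. -/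
open Finset

lemma pow_mul_descFactorial_le {j m : ℕ} (h : j ≤ m) :
    ∀ t, t ≤ j → m ^ t * j.descFactorial t ≤ j ^ t * m.descFactorial t := by
  intro t
  induction t with
  | zero => simp
  | succ t ih =>
    intro ht
    have ht' : t ≤ j := Nat.le_of_succ_le ht
    rw [Nat.descFactorial_succ, Nat.descFactorial_succ, pow_succ, pow_succ]
    have h1 : m * (j - t) ≤ j * (m - t) := by
      zify [ht', ht'.trans h]
      nlinarith [mul_le_mul_of_nonneg_right (show (j:ℤ) ≤ (m:ℤ) by exact_mod_cast h)
        (show (0:ℤ) ≤ (t:ℤ) by positivity)]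
    calc m ^ t * m * ((j - t) * j.descFactorial t)
        = (m * (j - t)) * (m ^ t * j.descFactorial t) := by ring
      _ ≤ (j * (m - t)) * (j ^ t * m.descFactorial t) := Nat.mul_le_mul h1 (ih ht')
      _ = j ^ t * j * ((m - t) * m.descFactorial t) := by ring

lemma pow_le_pow_mul_choose {j m : ℕ} (h : j ≤ m) : m ^ j ≤ j ^ j * m.choose j := by
  have key := pow_mul_descFactorial_le h j le_rfl
  rw [Nat.descFactorial_self, Nat.descFactorial_eq_factorial_mul_choose] at key
  refine Nat.le_of_mul_le_mul_right ?_ j.factorial_pos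
  calc m ^ j * j.factorial ≤ j ^ j * (j.factorial * m.choose j) := key
    _ = j ^ j * m.choose j * j.factorial := by ring

/-- Lemma: `β_j = Θ(1)` for balanced decks.
If at least `εn` of the types have multiplicity at least `j` and the average multiplicity
satisfies `m ≥ ε m*`, then `ε/j^j ≤ β_j ≤ 1/(ε^j j!)`. -/
theorem beta_theta (j : ℕ) (hj : 1 ≤ j) (ε : ℝ) (hε : 0 < ε)
    (n : ℕ) (hn : 1 ≤ n) (m : Fin n → ℕ)
    (hjm : j ≤ Finset.univ.sup m)
    (hfrac : ε * (n : ℝ) ≤ ((Finset.univ.filter fun i : Fin n => j ≤ m i).card : ℝ))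
    (havg : ε * ((Finset.univ.sup m : ℕ) : ℝ) ≤ ((∑ i, m i : ℕ) : ℝ) / n) :
    ε / (j : ℝ) ^ j ≤ beta n m j ∧ beta n m j ≤ 1 / (ε ^ j * (j.factorial : ℝ)) := by
  have hnF : Nonempty (Fin n) := Fin.pos_iff_nonempty.mp hn
  set H : Finset (Fin n) := Finset.univ.filter fun i : Fin n => j ≤ m i with hH
  have hn0 : (0 : ℝ) < n := by exact_mod_cast hn
  obtain ⟨i0, -, hi0⟩ := Finset.exists_mem_eq_sup Finset.univ Finset.univ_nonempty m
  have hjN : j ≤ ∑ i, m i := le_trans (hjm.trans hi0.le)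
    (Finset.single_le_sum (fun i _ => Nat.zero_le _) (Finset.mem_univ i0))
  have hN0 : (0 : ℝ) < ((∑ i, m i : ℕ) : ℝ) := by exact_mod_cast lt_of_lt_of_le hj hjN
  set c : ℝ := ((∑ i, m i : ℕ) : ℝ) / (n : ℝ) with hc
  have hc0 : 0 < c := div_pos hN0 hn0
  have hj0 : (0 : ℝ) < (j : ℝ) ^ j := by positivity
  have hden : (0 : ℝ) < (n : ℝ) * c ^ j := mul_pos hn0 (pow_pos hc0 j)
  have hcard0 : (0 : ℝ) < (H.card : ℝ) := lt_of_lt_of_le (by positivity) hfrac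
  have hbeta : beta n m j = (∑ i, ((m i).choose j : ℝ)) / ((n : ℝ) * c ^ j) := by
    rw [beta, ← Finset.sum_div, one_div_mul_eq_div, div_div, ← hc, mul_comm]
  constructor
  · -- lower bound
    set SH : ℕ := ∑ i ∈ H, m i with hSH
    have hSHj : H.card * j ≤ SH := by
      refine Finset.card_nsmul_le_sum H m j ?_
      intro i hi
      exact (Finset.mem_filter.mp hi).2
    have hsplit : ∑ i ∈ Finset.univ.filter (fun i : Fin n => j ≤ m i), m i
        + ∑ i ∈ Finset.univ.filter (fun i : Fin n => ¬ j ≤ m i), m i = ∑ i, m i :=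
      Finset.sum_filter_add_sum_filter_not _ _ _
    set L : Finset (Fin n) := Finset.univ.filter fun i : Fin n => ¬ j ≤ m i with hL
    have hLsum : ∑ i ∈ L, m i ≤ L.card * (j - 1) := by
      refine Finset.sum_le_card_nsmul L m (j - 1) ?_
      intro i hi
      have := (Finset.mem_filter.mp hi).2
      omega
    have hcards : H.card + L.card = n := by
      have h2 := Finset.card_filter_add_card_filter_not
        (s := (Finset.univ : Finset (Fin n))) (p := fun i : Fin n => j ≤ m i)
      rw [Finset.card_univ, Fintype.card_fin] at h2
      exact h2
    have hkey : (∑ i, m i) * H.card ≤ SH * n := by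
      have h1 : H.card * (∑ i ∈ L, m i) ≤ L.card * SH := by
        calc H.card * (∑ i ∈ L, m i) ≤ H.card * (L.card * (j-1)) :=
              Nat.mul_le_mul_left _ hLsum
          _ ≤ L.card * (H.card * j) := by
              have h2 : H.card * (j - 1) ≤ H.card * j := Nat.mul_le_mul_left _ (Nat.sub_le _ _)
              calc H.card * (L.card * (j-1)) = L.card * (H.card * (j-1)) := by ring
                _ ≤ L.card * (H.card * j) := Nat.mul_le_mul_left _ h2
          _ ≤ L.card * SH := Nat.mul_le_mul_left _ hSHj
      have hNe : ∑ i, m i = SH + ∑ i ∈ L, m i := by rw [← hsplit]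
      calc (∑ i, m i) * H.card = SH * H.card + H.card * (∑ i ∈ L, m i) := by rw [hNe]; ring
        _ ≤ SH * H.card + L.card * SH := by omega
        _ = (H.card + L.card) * SH := by ring
        _ = SH * n := by rw [hcards, Nat.mul_comm]
    have havgH : c ≤ (SH : ℝ) / (H.card : ℝ) := by
      rw [hc, div_le_div_iff₀ hn0 hcard0]
      exact_mod_cast hkey
    obtain ⟨t, rfl⟩ : ∃ t, j = t + 1 := ⟨j - 1, by omega⟩
    have hpm : ((SH : ℝ)) ^ (t+1) / (H.card : ℝ) ^ t ≤ ∑ i ∈ H, ((m i : ℝ)) ^ (t+1) := by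
      have h3 := pow_sum_div_card_le_sum_pow (s := H) (f := fun i => (m i : ℝ))
        (fun i _ => by positivity) t
      simpa [hSH] using h3
    have hchain : ε * (n : ℝ) * c ^ (t+1)
        ≤ ((t+1 : ℕ) : ℝ) ^ (t+1) * ∑ i, ((m i).choose (t+1) : ℝ) := by
      calc ε * (n : ℝ) * c ^ (t+1) ≤ (H.card : ℝ) * c ^ (t+1) :=
            mul_le_mul_of_nonneg_right hfrac (by positivity)
        _ ≤ (H.card : ℝ) * ((SH : ℝ) / (H.card : ℝ)) ^ (t+1) :=
            mul_le_mul_of_nonneg_left (pow_le_pow_left₀ hc0.le havgH _) hcard0.le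
        _ = ((SH : ℝ)) ^ (t+1) / (H.card : ℝ) ^ t := by
            rw [div_pow]
            field_simp
            ring
        _ ≤ ∑ i ∈ H, ((m i : ℝ)) ^ (t+1) := hpm
        _ ≤ ∑ i ∈ H, ((t+1 : ℕ) : ℝ) ^ (t+1) * ((m i).choose (t+1) : ℝ) := by
            apply Finset.sum_le_sum
            intro i hi
            have hji : t + 1 ≤ m i := (Finset.mem_filter.mp hi).2
            exact_mod_cast Nat.cast_le.mpr (pow_le_pow_mul_choose hji)
        _ = ((t+1 : ℕ) : ℝ) ^ (t+1) * ∑ i ∈ H, ((m i).choose (t+1) : ℝ) := by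
            rw [Finset.mul_sum]
        _ ≤ ((t+1 : ℕ) : ℝ) ^ (t+1) * ∑ i, ((m i).choose (t+1) : ℝ) := by
            apply mul_le_mul_of_nonneg_left _ (by positivity)
            apply Finset.sum_le_sum_of_subset_of_nonneg (Finset.filter_subset _ _)
            intro i _ _
            positivity
    rw [hbeta, div_le_div_iff₀ hj0 hden]
    calc ε * ((n:ℝ) * c ^ (t+1)) = ε * (n:ℝ) * c ^ (t+1) := by ring
      _ ≤ ((t+1:ℕ):ℝ) ^ (t+1) * ∑ i, ((m i).choose (t+1) : ℝ) := hchain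
      _ = (∑ i, ((m i).choose (t+1) : ℝ)) * ((t+1:ℕ):ℝ) ^ (t+1) := by ring
  · -- upper bound
    have hsup : (((Finset.univ.sup m : ℕ)) : ℝ) ≤ c / ε := by
      rw [le_div_iff₀ hε]
      calc ((Finset.univ.sup m : ℕ) : ℝ) * ε = ε * ((Finset.univ.sup m : ℕ) : ℝ) := by ring
        _ ≤ c := havg
    have hterm : ∀ i : Fin n, ((m i).choose j : ℝ) ≤ (c / ε) ^ j / (j.factorial : ℝ) := by
      intro i
      have hmi : ((m i : ℝ)) ≤ c / ε :=
        le_trans (by exact_mod_cast Finset.le_sup (Finset.mem_univ i)) hsup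
      calc ((m i).choose j : ℝ) ≤ ((m i : ℝ)) ^ j / (j.factorial : ℝ) :=
            Nat.choose_le_pow_div j (m i)
        _ ≤ (c / ε) ^ j / (j.factorial : ℝ) := by gcongr
    have hsum : ∑ i, ((m i).choose j : ℝ) ≤ (n : ℝ) * ((c / ε) ^ j / (j.factorial : ℝ)) := by
      calc ∑ i, ((m i).choose j : ℝ) ≤ ∑ _i : Fin n, (c / ε) ^ j / (j.factorial : ℝ) :=
            Finset.sum_le_sum fun i _ => hterm i
        _ = (n : ℝ) * ((c / ε) ^ j / (j.factorial : ℝ)) := by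
            simp [Finset.sum_const, Finset.card_univ, nsmul_eq_mul]
    rw [hbeta, div_le_iff₀ hden]
    calc ∑ i, ((m i).choose j : ℝ) ≤ (n : ℝ) * ((c / ε) ^ j / (j.factorial : ℝ)) := hsum
      _ = 1 / (ε ^ j * (j.factorial : ℝ)) * ((n : ℝ) * c ^ j) := by
          rw [div_pow]
          have hf : (0:ℝ) < (j.factorial : ℝ) := by exact_mod_cast j.factorial_pos
          field_simp
end

section
/- For every integer j ≥ 1 and every ε > 0 there exist constants c_1, c_2 > 0 such that the following holds. Let Z be a deck with multiplicities 𝐦 = (m_1,…,m_n) with j < m*, suppose at least εn of the types have multiplicity at least j+1, and suppose m ≥ ε·m*. Then for every set 𝐬 of j+1 distinct positions in {1,…,N}, c_1/n^j ≤ P(Y_𝐬 = 1) ≤ c_2/n^j. -/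
open Finset

open Finset

private lemma card_filter_equiv' {α β : Type*} [Fintype α] [Fintype β] [DecidableEq α] [DecidableEq β]
    (e : α ≃ β) (P : β → Prop) [DecidablePred P] :
    (univ.filter fun t => P (e t)).card = (univ.filter P).card := by
  apply Finset.card_bij (fun t _ => e t)
  · intro a ha; simp only [mem_filter, mem_univ, true_and] at ha ⊢; exact ha
  · intro a _ b _ h; exact e.injective h
  · intro b hb
    exact ⟨e.symm b, by simp only [mem_filter, mem_univ, true_and, Equiv.apply_symm_apply] at hb ⊢; exact hb, by simp⟩

private lemma comp_perm_mem_decks {n : ℕ} {m : Fin n → ℕ} {w : Fin (∑ i, m i) → Fin n}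
    (hw : w ∈ decks n m) (σ : Equiv.Perm (Fin (∑ i, m i))) :
    (fun t => w (σ t)) ∈ decks n m := by
  simp only [decks, mem_filter, mem_univ, true_and] at hw ⊢
  intro i
  rw [card_filter_equiv' σ (fun t => w t = i)]
  exact hw i

private lemma decks_nonempty (n : ℕ) (m : Fin n → ℕ) : (decks n m).Nonempty := by
  have e : (Σ i : Fin n, Fin (m i)) ≃ Fin (∑ i, m i) :=
    Fintype.equivOfCardEq (by simp)
  refine ⟨fun t => (e.symm t).1, ?_⟩
  simp only [decks, mem_filter, mem_univ, true_and]
  intro i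
  rw [card_filter_equiv' e.symm (fun x : Σ k, Fin (m k) => x.1 = i)]
  have : (univ.filter fun x : Σ k, Fin (m k) => x.1 = i)
      = univ.map ⟨fun y : Fin (m i) => ⟨i, y⟩, fun a b h => by simpa using h⟩ := by
    ext ⟨k, y⟩
    simp only [mem_filter, mem_univ, true_and, mem_map, Function.Embedding.coeFn_mk]
    constructor
    · rintro rfl; exact ⟨y, rfl⟩
    · rintro ⟨z, hz⟩; cases hz; rfl
  rw [this, card_map, card_univ, Fintype.card_fin]

open Finset

/-- Number of decks with value `i` on all positions of `s`. -/
def cnt (n : ℕ) (m : Fin n → ℕ) (i : Fin n) (s : Finset (Fin (∑ k, m k))) : ℕ :=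
  ((decks n m).filter fun w => ∀ p ∈ s, w p = i).card

private lemma cnt_insert_eq {n : ℕ} {m : Fin n → ℕ} (i : Fin n)
    {s : Finset (Fin (∑ k, m k))} {p q : Fin (∑ k, m k)} (hp : p ∉ s) (hq : q ∉ s) :
    cnt n m i (insert p s) = cnt n m i (insert q s) := by
  classical
  unfold cnt
  apply Finset.card_bij' (fun w _ => fun t => w (Equiv.swap p q t))
    (fun w _ => fun t => w (Equiv.swap p q t))
  · intro w hw
    simp only [mem_filter] at hw ⊢
    refine ⟨comp_perm_mem_decks hw.1 _, ?_⟩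
    intro r hr
    rcases Finset.mem_insert.1 hr with rfl | hr'
    · rw [Equiv.swap_apply_right]
      exact hw.2 p (mem_insert_self _ _)
    · rw [Equiv.swap_apply_of_ne_of_ne (by rintro rfl; exact hp hr') (by rintro rfl; exact hq hr')]
      exact hw.2 r (mem_insert_of_mem hr')
  · intro w hw
    simp only [mem_filter] at hw ⊢
    refine ⟨comp_perm_mem_decks hw.1 _, ?_⟩
    intro r hr
    rcases Finset.mem_insert.1 hr with rfl | hr'
    · rw [Equiv.swap_apply_left]
      exact hw.2 q (mem_insert_self _ _)
    · rw [Equiv.swap_apply_of_ne_of_ne (by rintro rfl; exact hp hr') (by rintro rfl; exact hq hr')]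
      exact hw.2 r (mem_insert_of_mem hr')
  · intro w _; funext t; simp [Equiv.swap_apply_self]
  · intro w _; funext t; simp [Equiv.swap_apply_self]

open Finset

private lemma cnt_step {n : ℕ} {m : Fin n → ℕ} (i : Fin n)
    {s : Finset (Fin (∑ k, m k))} {q : Fin (∑ k, m k)} (hq : q ∉ s) :
    (m i - s.card) * cnt n m i s = ((∑ k, m k) - s.card) * cnt n m i (insert q s) := by
  classical
  set D' := (decks n m).filter fun w => ∀ p ∈ s, w p = i with hD'
  have hper : ∀ w ∈ D', ((univ \ s).filter fun p => w p = i).card = m i - s.card := by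
    intro w hw
    simp only [hD', mem_filter] at hw
    have hfib : (univ.filter fun p => w p = i).card = m i := by
      have := (mem_filter.1 hw.1).2
      simp only [decks, mem_filter, mem_univ, true_and] at hw
      exact hw.1 i
    have hsub : s ⊆ univ.filter fun p => w p = i := by
      intro p hp; simp only [mem_filter, mem_univ, true_and]; exact hw.2 p hp
    have : (univ \ s).filter (fun p => w p = i) = (univ.filter fun p => w p = i) \ s := by
      ext p; simp only [mem_filter, mem_sdiff, mem_univ, true_and]; tauto
    rw [this, card_sdiff_of_subset hsub, hfib]
  have step1 : (m i - s.card) * D'.card = ∑ w ∈ D', ((univ \ s).filter fun p => w p = i).card := by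
    rw [Finset.sum_congr rfl hper, sum_const, smul_eq_mul, mul_comm]
  have step2 : ∑ w ∈ D', ((univ \ s).filter fun p => w p = i).card
      = ∑ p ∈ univ \ s, (D'.filter fun w => w p = i).card := by
    simp only [card_filter]
    rw [Finset.sum_comm]
  have step3 : ∀ p ∈ univ \ s, (D'.filter fun w => w p = i).card = cnt n m i (insert p s) := by
    intro p hp
    unfold cnt
    rw [hD', filter_filter]
    congr 1
    apply filter_congr
    intro w _
    simp only [forall_mem_insert]
    tauto
  have step4 : ∀ p ∈ univ \ s, cnt n m i (insert p s) = cnt n m i (insert q s) := by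
    intro p hp
    exact cnt_insert_eq i (by simpa using (mem_sdiff.1 hp).2) hq
  calc (m i - s.card) * cnt n m i s = ∑ w ∈ D', ((univ \ s).filter fun p => w p = i).card := step1
    _ = ∑ p ∈ univ \ s, (D'.filter fun w => w p = i).card := step2
    _ = ∑ p ∈ univ \ s, cnt n m i (insert q s) := by
        refine Finset.sum_congr rfl fun p hp => ?_
        rw [step3 p hp, step4 p hp]
    _ = ((∑ k, m k) - s.card) * cnt n m i (insert q s) := by
        rw [sum_const, smul_eq_mul]
        congr 1
        rw [card_sdiff_of_subset (subset_univ s), card_univ, Fintype.card_fin]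

private lemma cnt_formula {n : ℕ} {m : Fin n → ℕ} (i : Fin n) :
    ∀ (k : ℕ) (s : Finset (Fin (∑ k, m k))), s.card = k →
      Nat.descFactorial (∑ k, m k) k * cnt n m i s
        = Nat.descFactorial (m i) k * (decks n m).card := by
  intro k
  induction k with
  | zero =>
    intro s hs
    rw [Finset.card_eq_zero.1 hs]
    simp only [Nat.descFactorial_zero, one_mul]
    unfold cnt
    rw [filter_true_of_mem (by intro w _; simp)]
  | succ k ih =>
    intro s hs
    obtain ⟨q, hq⟩ := Finset.card_pos.1 (by omega : 0 < s.card)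
    have hq' : q ∉ s.erase q := Finset.notMem_erase q s
    have hsk : (s.erase q).card = k := by rw [Finset.card_erase_of_mem hq, hs]; omega
    have hins : insert q (s.erase q) = s := Finset.insert_erase hq
    have hstep := cnt_step i hq'
    rw [hsk, hins] at hstep
    rw [Nat.descFactorial_succ, Nat.descFactorial_succ]
    calc ((∑ k, m k) - k) * Nat.descFactorial (∑ k, m k) k * cnt n m i s
        = Nat.descFactorial (∑ k, m k) k * (((∑ k, m k) - k) * cnt n m i s) := by ring
      _ = Nat.descFactorial (∑ k, m k) k * ((m i - k) * cnt n m i (s.erase q)) := by rw [← hstep]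
      _ = (m i - k) * (Nat.descFactorial (∑ k, m k) k * cnt n m i (s.erase q)) := by ring
      _ = (m i - k) * (Nat.descFactorial (m i) k * (decks n m).card) := by rw [ih _ hsk]
      _ = (m i - k) * Nat.descFactorial (m i) k * (decks n m).card := by ring

open Finset

private lemma pr_eq {n : ℕ} {m : Fin n → ℕ} (s : Finset (Fin (∑ k, m k)))
    (hs : 0 < s.card) (hsN : s.card ≤ ∑ k, m k) :
    pr n m (fun w => ∃ i, ∀ p ∈ s, w p = i)
      = (∑ i, ((m i).descFactorial s.card : ℝ)) / ((∑ k, m k).descFactorial s.card : ℝ) := by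
  classical
  obtain ⟨p₀, hp₀⟩ := Finset.card_pos.1 hs
  have hsplit : ((decks n m).filter fun w => ∃ i, ∀ p ∈ s, w p = i)
      = univ.biUnion fun i => (decks n m).filter fun w => ∀ p ∈ s, w p = i := by
    ext w
    simp only [mem_filter, mem_biUnion, mem_univ, true_and]
    tauto
  have hdisj : ∀ i ∈ (univ : Finset (Fin n)), ∀ i' ∈ (univ : Finset (Fin n)), i ≠ i' →
      Disjoint ((decks n m).filter fun w => ∀ p ∈ s, w p = i)
        ((decks n m).filter fun w => ∀ p ∈ s, w p = i') := by
    intro i _ i' _ hii'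
    rw [Finset.disjoint_left]
    intro w hw hw'
    have h1 := (mem_filter.1 hw).2 p₀ hp₀
    have h2 := (mem_filter.1 hw').2 p₀ hp₀
    exact hii' (by rw [← h1, ← h2])
  have hA : ((decks n m).filter fun w => ∃ i, ∀ p ∈ s, w p = i).card = ∑ i, cnt n m i s := by
    rw [hsplit, Finset.card_biUnion hdisj]; rfl
  have hkey : (∑ k, m k).descFactorial s.card
        * ((decks n m).filter fun w => ∃ i, ∀ p ∈ s, w p = i).card
      = (∑ i, (m i).descFactorial s.card) * (decks n m).card := by
    rw [hA, Finset.mul_sum, Finset.sum_mul]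
    exact Finset.sum_congr rfl fun i _ => cnt_formula i s.card s rfl
  have hD : (0 : ℝ) < ((decks n m).card : ℝ) := by
    exact_mod_cast Finset.card_pos.2 (decks_nonempty n m)
  have hF : (0 : ℝ) < (((∑ k, m k).descFactorial s.card : ℕ) : ℝ) := by
    have : 0 < (∑ k, m k).descFactorial s.card := by
      rw [Nat.descFactorial_eq_factorial_mul_choose]
      exact Nat.mul_pos (Nat.factorial_pos _) (Nat.choose_pos hsN)
    exact_mod_cast this
  unfold pr
  rw [Finset.filter_congr_decidable]
  rw [div_eq_div_iff hD.ne' hF.ne', ← Nat.cast_sum, ← Nat.cast_mul, ← Nat.cast_mul]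
  exact_mod_cast by rw [mul_comm, ← hkey, mul_comm]


/-- Lemma: `P(Y_𝐬 = 1) = Θ(n^{−j})` for balanced decks.
For every `j ≥ 1` and `ε > 0` there are constants `c₁, c₂ > 0` such that for every deck
with `j < m*`, at least `εn` types of multiplicity at least `j+1`, and `m ≥ ε m*`:
for every set `s` of `j+1` positions, `c₁/n^j ≤ P(Y_s = 1) ≤ c₂/n^j`. -/
theorem prob_equal_tuple_order (j : ℕ) (hj : 1 ≤ j) (ε : ℝ) (hε : 0 < ε) :
    ∃ c₁ c₂ : ℝ, 0 < c₁ ∧ 0 < c₂ ∧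
      ∀ (n : ℕ) (m : Fin n → ℕ),
        j < Finset.univ.sup m →
        ε * (n : ℝ) ≤ ((Finset.univ.filter fun i : Fin n => j + 1 ≤ m i).card : ℝ) →
        ε * ((Finset.univ.sup m : ℕ) : ℝ) ≤ ((∑ i, m i : ℕ) : ℝ) / n →
        ∀ s : Finset (Fin (∑ i, m i)), s.card = j + 1 →
          c₁ / (n : ℝ) ^ j ≤ pr n m (fun w => ∃ i, ∀ p ∈ s, w p = i) ∧
          pr n m (fun w => ∃ i, ∀ p ∈ s, w p = i) ≤ c₂ / (n : ℝ) ^ j := by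
  classical
  have hj1 : (0:ℝ) < (j:ℝ) + 1 := by positivity
  refine ⟨min (ε * (Nat.factorial (j+1) : ℝ) * (1/(2*((j:ℝ)+1)))^(j+1)) ((1/2:ℝ)^(j+1)),
    ((j:ℝ)+1)^(j+1) * (1/ε)^j, ?_, ?_, ?_⟩
  · apply lt_min
    · positivity
    · positivity
  · positivity
  intro n m hsup hcnt hbal s hs
  set c₁ : ℝ := min (ε * (Nat.factorial (j+1) : ℝ) * (1/(2*((j:ℝ)+1)))^(j+1)) ((1/2:ℝ)^(j+1)) with hc₁
  set c₂ : ℝ := ((j:ℝ)+1)^(j+1) * (1/ε)^j with hc₂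
  have hc₁pos : 0 < c₁ := lt_min (by positivity) (by positivity)
  -- basic facts
  have hn : 0 < n := by
    rcases Nat.eq_zero_or_pos n with rfl | hn
    · simp only [Finset.univ_eq_empty, Finset.sup_empty, Nat.bot_eq_zero] at hsup; omega
    · exact hn
  have hM : j + 1 ≤ Finset.univ.sup m := hsup
  have hMN : Finset.univ.sup m ≤ ∑ i, m i := by
    obtain ⟨i₀, -, hi₀⟩ := Finset.exists_mem_eq_sup (univ : Finset (Fin n))
      ⟨⟨0, hn⟩, mem_univ _⟩ m
    rw [hi₀]
    exact Finset.single_le_sum (fun i _ => Nat.zero_le _) (mem_univ i₀)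
  have hjN : j + 1 ≤ ∑ i, m i := le_trans hM hMN
  rw [pr_eq s (by rw [hs]; omega) (by rw [hs]; exact hjN), hs]
  set nr : ℝ := (n : ℝ) with hnr
  have hnr0 : (0:ℝ) < nr := by rw [hnr]; exact_mod_cast hn
  set Nr : ℝ := ((∑ i, m i : ℕ) : ℝ) with hNrdef
  set Mr : ℝ := ((Finset.univ.sup m : ℕ) : ℝ) with hMrdef
  have hNr : (j:ℝ) + 1 ≤ Nr := by rw [hNrdef]; exact_mod_cast hjN
  have hNr0 : (0:ℝ) < Nr := lt_of_lt_of_le hj1 hNr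
  have hMr : (j:ℝ) + 1 ≤ Mr := by rw [hMrdef]; exact_mod_cast hM
  set S : ℝ := ∑ i, ((m i).descFactorial (j+1) : ℝ) with hSdef
  set F : ℝ := ((∑ i, m i).descFactorial (j+1) : ℝ) with hFdef
  have hS0 : 0 ≤ S := Finset.sum_nonneg fun i _ => by positivity
  have hF0 : (0:ℝ) < F := by
    have : 0 < (∑ i, m i).descFactorial (j+1) := by
      rw [Nat.descFactorial_eq_factorial_mul_choose]
      exact Nat.mul_pos (Nat.factorial_pos _) (Nat.choose_pos hjN)
    rw [hFdef]; exact_mod_cast this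
  have hFle : F ≤ Nr ^ (j+1) := by
    rw [hFdef, hNrdef, ← Nat.cast_pow]
    exact_mod_cast Nat.descFactorial_le_pow (∑ i, m i) (j+1)
  have hFge : (Nr - (j:ℝ)) ^ (j+1) ≤ F := by
    have h1 : ((∑ i, m i) - j) ^ (j+1) ≤ (∑ i, m i).descFactorial (j+1) := by
      have := Nat.pow_sub_le_descFactorial (∑ i, m i) (j+1)
      simpa [Nat.succ_sub_succ] using this
    have h2 : (((∑ i, m i) - j : ℕ) : ℝ) = Nr - (j:ℝ) := by
      rw [Nat.cast_sub (by omega)]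
    rw [← h2, ← Nat.cast_pow, hFdef]
    exact_mod_cast h1
  have hSleNM : S ≤ Nr * Mr ^ j := by
    have h1 : ∑ i, (m i).descFactorial (j+1) ≤ ∑ i, m i * (Finset.univ.sup m) ^ j := by
      apply Finset.sum_le_sum
      intro i _
      calc (m i).descFactorial (j+1) ≤ (m i) ^ (j+1) := Nat.descFactorial_le_pow _ _
        _ = m i * (m i) ^ j := by rw [pow_succ]; ring
        _ ≤ m i * (Finset.univ.sup m) ^ j := Nat.mul_le_mul_left _ (Nat.pow_le_pow_left (Finset.le_sup (mem_univ i)) j)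
    have h2 : ∑ i, m i * (Finset.univ.sup m) ^ j = (∑ i, m i) * (Finset.univ.sup m) ^ j := by rw [← Finset.sum_mul]
    calc S ≤ ((∑ i, m i * (Finset.univ.sup m) ^ j : ℕ) : ℝ) := by
          rw [hSdef, ← Nat.cast_sum]; exact_mod_cast h1
      _ = Nr * Mr ^ j := by rw [h2, hNrdef, hMrdef]; push_cast; ring
  constructor
  · -- lower bound
    have hSge1 : ε * nr * (Nat.factorial (j+1) : ℝ) ≤ S := by
      have hnat : (univ.filter fun i : Fin n => j + 1 ≤ m i).card * Nat.factorial (j+1)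
          ≤ ∑ i, (m i).descFactorial (j+1) := by
        calc (univ.filter fun i : Fin n => j + 1 ≤ m i).card * Nat.factorial (j+1)
            = ∑ _i ∈ univ.filter fun i : Fin n => j + 1 ≤ m i, Nat.factorial (j+1) := by
              rw [Finset.sum_const, smul_eq_mul]
          _ ≤ ∑ i ∈ univ.filter fun i : Fin n => j + 1 ≤ m i, (m i).descFactorial (j+1) := by
              apply Finset.sum_le_sum
              intro i hi
              rw [Nat.descFactorial_eq_factorial_mul_choose]
              exact Nat.le_mul_of_pos_right _ (Nat.choose_pos (mem_filter.1 hi).2)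
          _ ≤ ∑ i, (m i).descFactorial (j+1) :=
              Finset.sum_le_sum_of_subset (filter_subset _ _)
      have hnat' : ((univ.filter fun i : Fin n => j + 1 ≤ m i).card : ℝ) * (Nat.factorial (j+1):ℝ) ≤ S := by
        rw [hSdef, ← Nat.cast_sum]; exact_mod_cast hnat
      have hmul := mul_le_mul_of_nonneg_right hcnt (by positivity : (0:ℝ) ≤ (Nat.factorial (j+1):ℝ))
      linarith
    have hSge2 : (∑ i, max ((m i:ℝ) - (j:ℝ)) 0) ^ (j+1) / nr ^ j ≤ S := by
      have hj' := pow_sum_div_card_le_sum_pow (s := (univ : Finset (Fin n)))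
        (f := fun i => max ((m i:ℝ) - (j:ℝ)) 0) (fun i _ => le_max_right _ _) j
      rw [Finset.card_univ, Fintype.card_fin] at hj'
      have hstep : ∑ i, max ((m i:ℝ) - (j:ℝ)) 0 ^ (j+1) ≤ S := by
        rw [hSdef]
        apply Finset.sum_le_sum
        intro i _
        have h1 : max ((m i:ℝ) - (j:ℝ)) 0 ≤ ((m i - j : ℕ) : ℝ) := by
          rcases le_or_gt j (m i) with h | h
          · rw [Nat.cast_sub h]; exact max_le le_rfl (by simp; exact_mod_cast h)
          · have hle : (m i : ℝ) - (j:ℝ) ≤ 0 := by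
              have : (m i : ℝ) ≤ (j:ℝ) := by exact_mod_cast h.le
              linarith
            exact max_le (le_trans hle (by positivity)) (by positivity)
        calc max ((m i:ℝ) - (j:ℝ)) 0 ^ (j+1) ≤ ((m i - j : ℕ):ℝ) ^ (j+1) :=
              pow_le_pow_left₀ (le_max_right _ _) h1 _
          _ ≤ ((m i).descFactorial (j+1) : ℝ) := by
              rw [← Nat.cast_pow]
              have h2 := Nat.pow_sub_le_descFactorial (m i) (j+1)
              rw [Nat.succ_sub_succ] at h2
              exact_mod_cast h2
      calc (∑ i, max ((m i:ℝ) - (j:ℝ)) 0) ^ (j+1) / nr ^ j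
          = (∑ i, max ((m i:ℝ) - (j:ℝ)) 0) ^ (j+1) / (n:ℝ) ^ j := by rw [hnr]
        _ ≤ ∑ i, max ((m i:ℝ) - (j:ℝ)) 0 ^ (j+1) := hj'
        _ ≤ S := hstep
    rw [div_le_div_iff₀ (by positivity) hF0]
    have hred : c₁ * Nr ^ (j+1) ≤ S * nr ^ j → c₁ * F ≤ S * nr ^ j := by
      intro h
      calc c₁ * F ≤ c₁ * Nr ^ (j+1) := mul_le_mul_of_nonneg_left hFle hc₁pos.le
        _ ≤ S * nr ^ j := h
    apply hred
    set mb : ℝ := Nr / nr with hmb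
    have hmb0 : 0 < mb := div_pos hNr0 hnr0
    have hNreq : Nr = nr * mb := by rw [hmb]; field_simp
    rcases le_or_gt mb (2*((j:ℝ)+1)) with hcase | hcase
    · have h1 : c₁ * mb ^ (j+1) ≤ ε * (Nat.factorial (j+1):ℝ) := by
        calc c₁ * mb ^ (j+1)
            ≤ (ε * (Nat.factorial (j+1) : ℝ) * (1/(2*((j:ℝ)+1)))^(j+1)) * (2*((j:ℝ)+1))^(j+1) := by
              apply mul_le_mul (by rw [hc₁]; exact min_le_left _ _)
                (pow_le_pow_left₀ hmb0.le hcase _) (pow_nonneg hmb0.le _) (by positivity)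
          _ = ε * (Nat.factorial (j+1):ℝ) := by
              rw [mul_assoc, ← mul_pow,
                one_div_mul_cancel (by positivity : (0:ℝ) < 2*((j:ℝ)+1)).ne', one_pow, mul_one]
      calc c₁ * Nr ^ (j+1) = (c₁ * mb^(j+1)) * (nr * nr ^ j) := by
            rw [hNreq, mul_pow, pow_succ]; ring
        _ ≤ (ε * (Nat.factorial (j+1):ℝ)) * (nr * nr^j) := by
            apply mul_le_mul_of_nonneg_right h1 (by positivity)
        _ = (ε * nr * (Nat.factorial (j+1):ℝ)) * nr^j := by ring
        _ ≤ S * nr ^ j := mul_le_mul_of_nonneg_right hSge1 (by positivity)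
    · have hsum : nr * mb / 2 ≤ ∑ i, max ((m i:ℝ) - (j:ℝ)) 0 := by
        have h1 : ∑ i, ((m i:ℝ) - (j:ℝ)) ≤ ∑ i, max ((m i:ℝ) - (j:ℝ)) 0 :=
          Finset.sum_le_sum fun i _ => le_max_left _ _
        have h2 : ∑ i, ((m i:ℝ) - (j:ℝ)) = Nr - nr * (j:ℝ) := by
          rw [Finset.sum_sub_distrib, Finset.sum_const, card_univ, Fintype.card_fin,
            hNrdef, hnr]
          push_cast; ring
        have hj2 : (j:ℝ) ≤ mb/2 := by linarith
        have h4 : nr * (j:ℝ) ≤ nr * (mb/2) := mul_le_mul_of_nonneg_left hj2 hnr0.le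
        have h3 : nr * mb / 2 ≤ Nr - nr * (j:ℝ) := by
          rw [hNreq]; linarith
        linarith
      have hpow : (nr * mb / 2) ^ (j+1) ≤ S * nr ^ j := by
        rw [div_le_iff₀ (by positivity)] at hSge2
        calc (nr * mb / 2)^(j+1) ≤ (∑ i, max ((m i:ℝ) - (j:ℝ)) 0)^(j+1) :=
              pow_le_pow_left₀ (by positivity) hsum _
          _ ≤ S * nr ^ j := hSge2
      calc c₁ * Nr ^ (j+1) ≤ (1/2:ℝ)^(j+1) * Nr ^(j+1) := by
            apply mul_le_mul_of_nonneg_right (by rw [hc₁]; exact min_le_right _ _) (by positivity)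
        _ = (nr * mb / 2)^(j+1) := by rw [hNreq, ← mul_pow]; congr 1; ring
        _ ≤ S * nr ^ j := hpow
  · -- upper bound
    rw [div_le_div_iff₀ hF0 (by positivity)]
    have key : ε * nr * Mr ≤ Nr := by
      calc ε * nr * Mr = ε * Mr * nr := by ring
        _ ≤ Nr := by rwa [← le_div_iff₀ hnr0]
    have h1 : (ε * nr * Mr) ^ j ≤ Nr ^ j := by
      apply pow_le_pow_left₀ (by positivity) key
    have h2 : Nr ≤ ((j:ℝ)+1) * (Nr - j) := by nlinarith [mul_nonneg (Nat.cast_nonneg j : (0:ℝ) ≤ j) (by linarith : (0:ℝ) ≤ Nr - ((j:ℝ)+1))]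
    have h3 : Nr ^ (j+1) ≤ ((j:ℝ)+1) ^ (j+1) * (Nr - (j:ℝ)) ^ (j+1) := by
      rw [← mul_pow]
      exact pow_le_pow_left₀ (by positivity) h2 _
    have hεj : (0:ℝ) < ε ^ j := pow_pos hε j
    rw [← mul_le_mul_iff_of_pos_right hεj]
    have hfinal : c₂ * F * ε ^ j = ((j:ℝ)+1)^(j+1) * F := by
      rw [hc₂]; field_simp; rw [← mul_pow, one_div_mul_cancel hε.ne', one_pow]
    rw [hfinal]
    calc S * nr ^ j * ε ^ j = S * (ε * nr) ^ j := by rw [mul_pow]; ring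
      _ ≤ (Nr * Mr ^ j) * (ε * nr) ^ j := by
          apply mul_le_mul_of_nonneg_right hSleNM (by positivity)
      _ = Nr * (ε * nr * Mr) ^ j := by rw [mul_pow, mul_pow]; ring
      _ ≤ Nr * Nr ^ j := by
          apply mul_le_mul_of_nonneg_left h1 (le_of_lt hNr0)
      _ = Nr ^ (j+1) := by rw [pow_succ]; ring
      _ ≤ ((j:ℝ)+1) ^ (j+1) * (Nr - (j:ℝ)) ^ (j+1) := h3
      _ ≤ ((j:ℝ)+1) ^ (j+1) * F := by
          apply mul_le_mul_of_nonneg_left hFge (by positivity)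
end

section
/- Let Z be a deck with multiplicities 𝐦 = (m_1,…,m_n) and N = Σ_i m_i cards. Then the expected number of correct guesses under the optimal strategy satisfies E[S_𝐦^+] = m*·H_N − Σ_{j=1}^{m*−1} E[H_{T_j}], where H_k = 1 + 1/2 + ⋯ + 1/k (with H_0 = 0) and T_j is the last time, counting from the bottom of the deck, that no card type has appeared more than j times. -/
open Finset

namespace CG

variable {n N : ℕ}

/-- count of `i` among the first `t` positions -/
def cnt (t : ℕ) (w : Fin N → Fin n) (i : Fin n) : ℕ :=
  (Finset.univ.filter fun s : Fin N => (s : ℕ) < t ∧ w s = i).card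

/-- count of `i` among positions `≥ t` -/
def scnt (t : ℕ) (w : Fin N → Fin n) (i : Fin n) : ℕ :=
  (Finset.univ.filter fun s : Fin N => t ≤ (s : ℕ) ∧ w s = i).card

lemma cnt_mono (w : Fin N → Fin n) (i : Fin n) {t t' : ℕ} (h : t ≤ t') :
    cnt t w i ≤ cnt t' w i := by
  apply Finset.card_le_card
  intro s hs
  simp only [Finset.mem_filter, Finset.mem_univ, true_and] at *
  exact ⟨lt_of_lt_of_le hs.1 h, hs.2⟩

lemma cnt_zero (w : Fin N → Fin n) (i : Fin n) : cnt 0 w i = 0 := by simp [cnt]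

lemma cnt_add_scnt (t : ℕ) (w : Fin N → Fin n) (i : Fin n) :
    cnt t w i + scnt t w i = (Finset.univ.filter fun s => w s = i).card := by
  classical
  rw [cnt, scnt]
  rw [← Finset.card_filter_add_card_filter_not
    (s := Finset.univ.filter fun s : Fin N => w s = i) (p := fun s => (s : ℕ) < t)]
  congr 1
  · congr 1; ext s; simp only [Finset.mem_filter, Finset.mem_univ, true_and]; tauto
  · congr 1; ext s; simp only [Finset.mem_filter, Finset.mem_univ, true_and, Nat.not_lt]; tauto

lemma card_lt_filter (t : ℕ) :
    (Finset.univ.filter fun s : Fin N => (s : ℕ) < t).card = min t N := by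
  rw [Finset.card_filter]
  rw [Fin.sum_univ_eq_sum_range (fun k => if k < t then (1:ℕ) else 0)]
  rw [← Finset.card_filter]
  have : (Finset.range N).filter (fun k => k < t) = Finset.range (min t N) := by
    ext k; simp; omega
  rw [this, Finset.card_range]

lemma card_ge_filter (t : ℕ) :
    (Finset.univ.filter fun s : Fin N => t ≤ (s : ℕ)).card = N - t := by
  rw [Finset.card_filter]
  rw [Fin.sum_univ_eq_sum_range (fun k => if t ≤ k then (1:ℕ) else 0)]
  rw [← Finset.card_filter]
  have : (Finset.range N).filter (fun k => t ≤ k) = Finset.Ico t N := by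
    ext k; simp [Finset.mem_Ico]; omega
  rw [this, Nat.card_Ico]

lemma sum_cnt (t : ℕ) (w : Fin N → Fin n) : ∑ i, cnt t w i = min t N := by
  classical
  rw [← card_lt_filter (N := N) t]
  rw [Finset.card_eq_sum_card_fiberwise (f := w) (t := Finset.univ)
    (fun x _ => Finset.mem_univ _)]
  refine Finset.sum_congr rfl fun i _ => ?_
  rw [cnt, Finset.filter_filter]

lemma scnt_rev (t : ℕ) (w : Fin N → Fin n) (i : Fin n) :
    scnt t w i = cnt (N - t) (fun s => w s.rev) i := by
  apply Finset.card_equiv (Fin.revPerm)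
  intro s
  simp only [Finset.mem_filter, Finset.mem_univ, true_and, Fin.revPerm_apply, Fin.rev_rev]
  have hs := s.isLt
  have hrev : ((s.rev : Fin N) : ℕ) = N - 1 - (s : ℕ) := by
    rw [Fin.val_rev]; omega
  rw [hrev]
  constructor
  · intro hh; exact ⟨by omega, hh.2⟩
  · intro hh; exact ⟨by omega, hh.2⟩

lemma cnt_succ (w : Fin N → Fin n) (i : Fin n) {t : ℕ} (ht : t < N) :
    cnt (t + 1) w i = cnt t w i + (if w ⟨t, ht⟩ = i then 1 else 0) := by
  classical
  rw [cnt, cnt, Finset.card_filter, Finset.card_filter]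
  have key : ∀ s : Fin N, (if ((s : ℕ) < t + 1 ∧ w s = i) then (1:ℕ) else 0)
      = (if ((s : ℕ) < t ∧ w s = i) then 1 else 0)
        + (if s = ⟨t, ht⟩ then (if w s = i then 1 else 0) else 0) := by
    intro s
    by_cases hs : s = ⟨t, ht⟩
    · subst hs; simp only [if_pos rfl]
      split_ifs with h1 h2 h2 <;> simp_all <;> omega
    · have hval : (s : ℕ) ≠ t := fun h => hs (Fin.ext h)
      simp only [if_neg hs, add_zero]
      split_ifs with h1 h2 h2 <;> simp_all <;> omega
  simp_rw [key]
  rw [Finset.sum_add_distrib]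
  congr 1
  rw [Finset.sum_ite_eq' Finset.univ (⟨t, ht⟩ : Fin N)]
  simp

lemma count_take (w : Fin N → Fin n) (i : Fin n) :
    ∀ t, t ≤ N → ((List.ofFn w).take t).count i = cnt t w i := by
  intro t
  induction t with
  | zero => intro _; simp [cnt_zero]
  | succ t ih =>
    intro ht
    have ht' : t < N := ht
    have hget : (List.ofFn w)[t]? = some (w ⟨t, ht'⟩) := by
      rw [List.getElem?_eq_getElem (by simpa using ht')]
      simp
    rw [List.take_succ, hget, List.count_append, ih (le_of_lt ht'), cnt_succ w i ht']
    congr 1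
    by_cases h : w ⟨t, ht'⟩ = i <;> simp [h, List.count_singleton']


lemma comp_equiv_mem_decks {m : Fin n → ℕ} {w : Fin (∑ i, m i) → Fin n}
    (hw : w ∈ decks n m) (e : Equiv.Perm (Fin (∑ i, m i))) : w ∘ e ∈ decks n m := by
  simp only [decks, Finset.mem_filter, Finset.mem_univ, true_and] at *
  intro i
  rw [← hw i]
  exact Finset.card_equiv e (fun s => by simp)

lemma card_value_eq {m : Fin n → ℕ} {w : Fin (∑ i, m i) → Fin n}
    (hw : w ∈ decks n m) (i : Fin n) :
    (Finset.univ.filter fun s => w s = i).card = m i := by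
  simp only [decks, Finset.mem_filter, Finset.mem_univ, true_and] at hw
  exact hw i

lemma cnt_N {m : Fin n → ℕ} {w : Fin (∑ i, m i) → Fin n}
    (hw : w ∈ decks n m) (i : Fin n) : cnt (∑ i, m i) w i = m i := by
  rw [← card_value_eq hw i, cnt]
  congr 1
  ext s
  simp [s.isLt]

lemma cnt_le {m : Fin n → ℕ} {w : Fin (∑ i, m i) → Fin n}
    (hw : w ∈ decks n m) (i : Fin n) (t : ℕ) : cnt t w i ≤ m i := by
  rcases le_total t (∑ i, m i) with h | h
  · exact le_trans (cnt_mono w i h) (le_of_eq (cnt_N hw i))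
  · apply le_of_eq
    rw [← cnt_N hw i, cnt, cnt]
    congr 1
    ext s
    have := s.isLt
    simp only [Finset.mem_filter, Finset.mem_univ, true_and]
    constructor
    · intro hh; exact ⟨by omega, hh.2⟩
    · intro hh; exact ⟨by omega, hh.2⟩

lemma scnt_eq_sub {m : Fin n → ℕ} {w : Fin (∑ i, m i) → Fin n}
    (hw : w ∈ decks n m) (i : Fin n) (t : ℕ) : scnt t w i = m i - cnt t w i := by
  have h := cnt_add_scnt t w i
  rw [card_value_eq hw i] at h
  omega

lemma decks_nonempty (n : ℕ) (m : Fin n → ℕ) : (decks n m).Nonempty := by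
  classical
  have hcard : Fintype.card (Fin (∑ i, m i)) = Fintype.card (Σ i, Fin (m i)) := by
    simp
  obtain e := Fintype.equivOfCardEq hcard
  refine ⟨fun s => (e s).1, ?_⟩
  simp only [decks, Finset.mem_filter, Finset.mem_univ, true_and]
  intro i
  rw [Finset.card_equiv e (t := Finset.univ.filter fun p : Σ j, Fin (m j) => p.1 = i)
    (fun s => by simp)]
  rw [← Fintype.card_subtype]
  have e2 : {p : Σ j, Fin (m j) // p.1 = i} ≃ Fin (m i) :=
    { toFun := fun p => Fin.cast (congrArg m p.2) p.1.2
      invFun := fun y => ⟨⟨i, y⟩, rfl⟩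
      left_inv := by rintro ⟨⟨j, y⟩, rfl⟩; rfl
      right_inv := fun y => rfl }
  rw [Fintype.card_congr e2, Fintype.card_fin]

/-- the prefix of length `t` -/
def pref (t : ℕ) (w : Fin N → Fin n) : List (Fin n) := (List.ofFn w).take t

lemma pref_comp_swap (w : Fin N → Fin n) (t s : Fin N) (hts : t ≤ s) :
    pref (t : ℕ) (w ∘ Equiv.swap t s) = pref (t : ℕ) w := by
  unfold pref
  apply List.ext_getElem (by simp)
  intro k h1 h2
  have hk : k < (t : ℕ) := by
    simp only [List.length_take, List.length_ofFn] at h1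
    omega
  have hkN : k < N := by
    simp only [List.length_take, List.length_ofFn] at h1
    omega
  simp only [List.getElem_take, List.getElem_ofFn]
  show w (Equiv.swap t s ⟨k, hkN⟩) = w ⟨k, hkN⟩
  rw [Equiv.swap_apply_of_ne_of_ne]
  · intro h; rw [Fin.ext_iff] at h; simp at h; omega
  · intro h; rw [Fin.ext_iff] at h; simp at h
    have : (t : ℕ) ≤ (s : ℕ) := hts
    omega

lemma key_card {m : Fin n → ℕ} (g : List (Fin n) → Fin n) (t : Fin (∑ i, m i)) :
    ((decks n m).filter fun w => g (pref (t : ℕ) w) = w t).card * ((∑ i, m i) - (t : ℕ))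
      = ∑ w ∈ decks n m, scnt (t : ℕ) w (g (pref (t : ℕ) w)) := by
  classical
  have hrhs : ∑ w ∈ decks n m, scnt (t : ℕ) w (g (pref (t : ℕ) w))
      = ((decks n m).sigma fun w => Finset.univ.filter
          fun s : Fin (∑ i, m i) => (t : ℕ) ≤ (s : ℕ) ∧ w s = g (pref (t : ℕ) w)).card := by
    rw [Finset.card_sigma]; rfl
  rw [hrhs]
  rw [← card_ge_filter (N := ∑ i, m i) (t : ℕ), ← Finset.card_product]
  apply Finset.card_bij'
    (i := fun p _ => (⟨p.1 ∘ Equiv.swap t p.2, p.2⟩ :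
      Σ _w : Fin (∑ i, m i) → Fin n, Fin (∑ i, m i)))
    (j := fun q _ => (q.1 ∘ Equiv.swap t q.2, q.2))
  · rintro ⟨w, s⟩ hp
    simp only [Finset.mem_product, Finset.mem_filter, Finset.mem_univ, true_and] at hp
    obtain ⟨⟨hw, hguess⟩, hts⟩ := hp
    have hts' : t ≤ s := hts
    simp only [Finset.mem_sigma, Finset.mem_filter, Finset.mem_univ, true_and]
    refine ⟨comp_equiv_mem_decks hw _, hts, ?_⟩
    rw [pref_comp_swap w t s hts']
    show w (Equiv.swap t s s) = _
    rw [Equiv.swap_apply_right]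
    exact hguess.symm
  · rintro ⟨w, s⟩ hq
    simp only [Finset.mem_sigma, Finset.mem_filter, Finset.mem_univ, true_and] at hq
    obtain ⟨hw, hts, hval⟩ := hq
    have hts' : t ≤ s := hts
    simp only [Finset.mem_product, Finset.mem_filter, Finset.mem_univ, true_and]
    refine ⟨⟨comp_equiv_mem_decks hw _, ?_⟩, hts⟩
    rw [pref_comp_swap w t s hts']
    show _ = w (Equiv.swap t s t)
    rw [Equiv.swap_apply_left]
    exact hval.symm
  · rintro ⟨w, s⟩ _
    simp only
    congr 1
    funext x
    simp [Equiv.swap_apply_self]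
  · rintro ⟨w, s⟩ _
    simp only
    congr 1
    funext x
    simp [Equiv.swap_apply_self]

noncomputable def gstar (hn : 0 < n) (m : Fin n → ℕ) (l : List (Fin n)) : Fin n :=
  (Finset.exists_mem_eq_sup (Finset.univ : Finset (Fin n)) ⟨⟨0, hn⟩, Finset.mem_univ _⟩
    (fun i => m i - l.count i)).choose

lemma gstar_spec (hn : 0 < n) (m : Fin n → ℕ) (l : List (Fin n)) :
    m (gstar hn m l) - l.count (gstar hn m l)
      = Finset.univ.sup (fun i => m i - l.count i) :=
  (Finset.exists_mem_eq_sup (Finset.univ : Finset (Fin n)) ⟨⟨0, hn⟩, Finset.mem_univ _⟩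
    (fun i => m i - l.count i)).choose_spec.2.symm

lemma scnt_gstar (hn : 0 < n) {m : Fin n → ℕ} {w : Fin (∑ i, m i) → Fin n}
    (hw : w ∈ decks n m) {t : ℕ} (ht : t ≤ ∑ i, m i) :
    scnt t w (gstar hn m (pref t w)) = Finset.univ.sup (fun i => scnt t w i) := by
  have hcnt : ∀ i, (pref t w).count i = cnt t w i := fun i => count_take w i t ht
  have hfun : ∀ i, m i - (pref t w).count i = scnt t w i := by
    intro i
    rw [hcnt i, scnt_eq_sub hw i t]
  rw [← hfun, gstar_spec]
  congr 1
  funext i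
  rw [hfun]

lemma sum_score_eq {m : Fin n → ℕ} (g : List (Fin n) → Fin n) :
    ∑ w ∈ decks n m, (score g w : ℝ)
      = ∑ t : Fin (∑ i, m i), (∑ w ∈ decks n m, (scnt (t : ℕ) w (g (pref (t : ℕ) w)) : ℝ))
          / (((∑ i, m i) - (t : ℕ) : ℕ) : ℝ) := by
  classical
  have hsc : ∀ w : Fin (∑ i, m i) → Fin n, (score g w : ℝ)
      = ∑ t : Fin (∑ i, m i), if g (pref (t : ℕ) w) = w t then (1 : ℝ) else 0 := by
    intro w
    rw [score, Finset.card_filter]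
    push_cast
    rfl
  rw [Finset.sum_congr rfl fun w _ => hsc w, Finset.sum_comm]
  refine Finset.sum_congr rfl fun t _ => ?_
  have hcard : ∑ w ∈ decks n m, (if g (pref (t : ℕ) w) = w t then (1 : ℝ) else 0)
      = (((decks n m).filter fun w => g (pref (t : ℕ) w) = w t).card : ℝ) := by
    rw [Finset.card_filter]
    push_cast
    rfl
  rw [hcard]
  have hpos : (0 : ℝ) < (((∑ i, m i) - (t : ℕ) : ℕ) : ℝ) := by
    have := t.isLt
    have : 0 < (∑ i, m i) - (t : ℕ) := by omega
    exact_mod_cast this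
  rw [eq_div_iff hpos.ne']
  rw [← Nat.cast_sum]
  rw [← key_card g t]
  push_cast
  ring

lemma sum_score_le (hn : 0 < n) {m : Fin n → ℕ} (g : List (Fin n) → Fin n) :
    ∑ w ∈ decks n m, (score g w : ℝ) ≤ ∑ w ∈ decks n m, (score (gstar hn m) w : ℝ) := by
  rw [sum_score_eq, sum_score_eq]
  apply Finset.sum_le_sum
  intro t _
  apply div_le_div_of_nonneg_right
  · apply Finset.sum_le_sum
    intro w hw
    have ht : (t : ℕ) ≤ ∑ i, m i := le_of_lt t.isLt
    calc (scnt (t : ℕ) w (g (pref (t : ℕ) w)) : ℝ)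
        ≤ ((Finset.univ.sup fun i => scnt (t : ℕ) w i : ℕ) : ℝ) := by
          exact_mod_cast Finset.le_sup (Finset.mem_univ _)
      _ = (scnt (t : ℕ) w (gstar hn m (pref (t : ℕ) w)) : ℝ) := by
          rw [scnt_gstar hn hw ht]
  · positivity

lemma T_spec (j : ℕ) (v : Fin N → Fin n) :
    T j v ≤ N ∧ ∀ i, cnt (T j v) v i ≤ j :=
  Nat.sSup_mem (s := {t | t ≤ N ∧ ∀ i, cnt t v i ≤ j})
    ⟨0, ⟨Nat.zero_le _, fun i => by simp [cnt_zero]⟩⟩ ⟨N, fun t ht => ht.1⟩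

lemma le_T {j t : ℕ} (v : Fin N → Fin n) (ht : t ≤ N) (h : ∀ i, cnt t v i ≤ j) :
    t ≤ T j v :=
  le_csSup (s := {t | t ≤ N ∧ ∀ i, cnt t v i ≤ j}) ⟨N, fun u hu => hu.1⟩ ⟨ht, h⟩

lemma T_le_iff {j k : ℕ} (v : Fin N → Fin n) (hk : k < N) :
    T j v ≤ k ↔ j < Finset.univ.sup (fun i => cnt (k + 1) v i) := by
  rw [Finset.lt_sup_iff]
  constructor
  · intro hT
    by_contra hc
    push_neg at hc
    have : k + 1 ≤ T j v := le_T v (by omega) (fun i => hc i (Finset.mem_univ i))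
    omega
  · rintro ⟨i, _, hi⟩
    by_contra hc
    push_neg at hc
    have h2 := (T_spec j v).2 i
    have : cnt (k + 1) v i ≤ cnt (T j v) v i := cnt_mono v i (by omega)
    omega

lemma T_zero (v : Fin N → Fin n) : T 0 v = 0 := by
  have hs := T_spec 0 v
  by_contra h
  have hz : ∑ i, cnt (T 0 v) v i = 0 :=
    Finset.sum_eq_zero (fun i _ => Nat.le_zero.mp (hs.2 i))
  rw [sum_cnt] at hz
  omega

lemma mu_card {m : Fin n → ℕ} {v : Fin (∑ i, m i) → Fin n} (hv : v ∈ decks n m)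
    {k : ℕ} (hk : k < ∑ i, m i) :
    (Finset.range (Finset.univ.sup m)).filter (fun j => T j v ≤ k)
      = Finset.range (Finset.univ.sup (fun i => cnt (k + 1) v i)) := by
  ext j
  simp only [Finset.mem_filter, Finset.mem_range]
  constructor
  · rintro ⟨hj, hT⟩
    exact (T_le_iff v hk).mp hT
  · intro hj
    have hjm : j < Finset.univ.sup m := lt_of_lt_of_le hj
      (Finset.sup_le fun i _ => le_trans (cnt_le hv i _) (Finset.le_sup (Finset.mem_univ i)))
    exact ⟨hjm, (T_le_iff v hk).mpr hj⟩

lemma harm_tail {t N : ℕ} (h : t ≤ N) :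
    ∑ k ∈ Finset.range N, (if t ≤ k then (1 : ℝ) / (k + 1) else 0) = harm N - harm t := by
  rw [harm, harm, ← Finset.sum_filter]
  have h1 : (Finset.range N).filter (fun k => t ≤ k) = Finset.Ico t N := by
    ext k; simp [Finset.mem_Ico]; omega
  rw [h1]
  have h2 : Finset.range N = Finset.Ico 0 N := by rw [Finset.range_eq_Ico]
  have h3 : Finset.range t = Finset.Ico 0 t := by rw [Finset.range_eq_Ico]
  rw [h2, h3, ← Finset.sum_Ico_consecutive (fun k => (1:ℝ)/(k+1)) (Nat.zero_le t) h]
  ring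

lemma perword {m : Fin n → ℕ} {w : Fin (∑ i, m i) → Fin n} (hw : w ∈ decks n m) :
    ∑ t : Fin (∑ i, m i), ((Finset.univ.sup fun i => scnt (t : ℕ) w i : ℕ) : ℝ)
        / (((∑ i, m i) - (t : ℕ) : ℕ) : ℝ)
      = ((Finset.univ.sup m : ℕ) : ℝ) * harm (∑ i, m i)
        - ∑ j ∈ Finset.Icc 1 (Finset.univ.sup m - 1), harm (T j fun s => w s.rev) := by
  classical
  have hv : (fun s => w s.rev) ∈ decks n m := by
    have := comp_equiv_mem_decks hw Fin.revPerm
    convert this using 1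
    funext s
    simp [Fin.revPerm_apply]
  -- reindex by rev
  have step1 : ∑ t : Fin (∑ i, m i), ((Finset.univ.sup fun i => scnt (t : ℕ) w i : ℕ) : ℝ)
        / (((∑ i, m i) - (t : ℕ) : ℕ) : ℝ)
      = ∑ t : Fin (∑ i, m i),
          ((Finset.univ.sup fun i => cnt ((t : ℕ) + 1) (fun s => w s.rev) i : ℕ) : ℝ)
            / (((t : ℕ) + 1 : ℕ) : ℝ) := by
    apply Fintype.sum_equiv Fin.revPerm
    intro t
    have htN := t.isLt
    have hrev : ((Fin.revPerm t : Fin (∑ i, m i)) : ℕ) = (∑ i, m i) - 1 - (t : ℕ) := by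
      simp [Fin.val_rev]; omega
    have h1 : (Finset.univ.sup fun i => scnt ((t : ℕ)) w i)
        = Finset.univ.sup fun i => cnt (((Fin.revPerm t : Fin (∑ i, m i)) : ℕ) + 1)
            (fun s => w s.rev) i := by
      congr 1
      funext i
      rw [scnt_rev]
      congr 1
      omega
    rw [h1]
    congr 2
    omega
  rw [step1, Fin.sum_univ_eq_sum_range (fun k =>
    ((Finset.univ.sup fun i => cnt (k + 1) (fun s => w s.rev) i : ℕ) : ℝ) / ((k + 1 : ℕ) : ℝ))]
  have step2 : ∀ k ∈ Finset.range (∑ i, m i),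
      ((Finset.univ.sup fun i => cnt (k + 1) (fun s => w s.rev) i : ℕ) : ℝ) / ((k + 1 : ℕ) : ℝ)
        = ∑ j ∈ Finset.range (Finset.univ.sup m),
            (if T j (fun s => w s.rev) ≤ k then (1 : ℝ) / (k + 1) else 0) := by
    intro k hk
    rw [Finset.mem_range] at hk
    have hmu : ((Finset.univ.sup fun i => cnt (k + 1) (fun s => w s.rev) i : ℕ) : ℝ)
        = ∑ j ∈ Finset.range (Finset.univ.sup m),
            (if T j (fun s => w s.rev) ≤ k then (1 : ℝ) else 0) := by
      have hc : (Finset.univ.sup fun i => cnt (k + 1) (fun s => w s.rev) i)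
          = ((Finset.range (Finset.univ.sup m)).filter
              (fun j => T j (fun s => w s.rev) ≤ k)).card := by
        rw [mu_card hv hk, Finset.card_range]
      rw [hc, Finset.card_filter]
      push_cast
      rfl
    rw [hmu, Finset.sum_div]
    refine Finset.sum_congr rfl fun j _ => ?_
    push_cast
    split <;> simp
  rw [Finset.sum_congr rfl step2, Finset.sum_comm]
  have step3 : ∀ j ∈ Finset.range (Finset.univ.sup m),
      ∑ k ∈ Finset.range (∑ i, m i),
          (if T j (fun s => w s.rev) ≤ k then (1 : ℝ) / (k + 1) else 0)
        = harm (∑ i, m i) - harm (T j (fun s => w s.rev)) := by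
    intro j _
    have hT := (T_spec j (fun s => w s.rev)).1
    have : ∀ k : ℕ, (if T j (fun s => w s.rev) ≤ k then (1 : ℝ) / (k + 1) else 0)
        = (if T j (fun s => w s.rev) ≤ k then (1 : ℝ) / ((k : ℝ) + 1) else 0) := by
      intro k; norm_num
    rw [Finset.sum_congr rfl (fun k _ => this k), harm_tail hT]
  rw [Finset.sum_congr rfl step3, Finset.sum_sub_distrib, Finset.sum_const, Finset.card_range,
    nsmul_eq_mul]
  congr 1
  -- split off j = 0
  rcases Nat.eq_zero_or_pos (Finset.univ.sup m) with h0 | hpos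
  · rw [h0]; simp
  · rw [Finset.range_eq_Ico,
      ← Finset.sum_Ico_consecutive (fun j => harm (T j fun s => w s.rev)) (Nat.zero_le 1) hpos]
    have hIco01 : ∑ j ∈ Finset.Ico 0 1, harm (T j fun s => w s.rev) = 0 := by
      have h01 : Finset.Ico 0 1 = {0} := by ext j; simp [Finset.mem_Ico]
      rw [h01, Finset.sum_singleton, T_zero]
      simp [harm]
    have hIco : Finset.Ico 1 (Finset.univ.sup m) = Finset.Icc 1 (Finset.univ.sup m - 1) := by
      ext j; rw [Finset.mem_Ico, Finset.mem_Icc]; omega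
    rw [hIco01, zero_add, hIco]

lemma ESplus_pos_case (hn : 0 < n) (m : Fin n → ℕ) :
    ESplus n m = _root_.expect n m (fun w => (score (gstar hn m) w : ℝ)) := by
  haveI : Nonempty (Fin n) := ⟨⟨0, hn⟩⟩
  unfold ESplus _root_.expect
  apply le_antisymm
  · apply ciSup_le
    intro g
    exact div_le_div_of_nonneg_right (sum_score_le hn g) (by positivity)
  · apply le_ciSup (f := fun g => (∑ w ∈ decks n m, (score g w : ℝ)) / ((decks n m).card : ℝ))
      ?_ (gstar hn m)
    refine ⟨(∑ w ∈ decks n m, (score (gstar hn m) w : ℝ)) / ((decks n m).card : ℝ), ?_⟩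
    rintro x ⟨g, rfl⟩
    exact div_le_div_of_nonneg_right (sum_score_le hn g) (by positivity)

lemma main_pos (hn : 0 < n) (m : Fin n → ℕ) :
    ESplus n m =
      ((Finset.univ.sup m : ℕ) : ℝ) * harm (∑ i, m i) -
        ∑ j ∈ Finset.Icc 1 (Finset.univ.sup m - 1),
          _root_.expect n m (fun w => harm (T j (fun s => w s.rev))) := by
  rw [ESplus_pos_case hn m]
  unfold _root_.expect
  have hsum : ∑ w ∈ decks n m, (score (gstar hn m) w : ℝ)
      = ∑ w ∈ decks n m, (((Finset.univ.sup m : ℕ) : ℝ) * harm (∑ i, m i)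
          - ∑ j ∈ Finset.Icc 1 (Finset.univ.sup m - 1), harm (T j fun s => w s.rev)) := by
    rw [sum_score_eq (gstar hn m)]
    have h1 : ∀ t : Fin (∑ i, m i),
        (∑ w ∈ decks n m, (scnt (t : ℕ) w (gstar hn m (pref (t : ℕ) w)) : ℝ))
            / (((∑ i, m i) - (t : ℕ) : ℕ) : ℝ)
          = ∑ w ∈ decks n m, ((Finset.univ.sup fun i => scnt (t : ℕ) w i : ℕ) : ℝ)
              / (((∑ i, m i) - (t : ℕ) : ℕ) : ℝ) := by
      intro t
      rw [Finset.sum_div]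
      refine Finset.sum_congr rfl fun w hw => ?_
      rw [scnt_gstar hn hw (le_of_lt t.isLt)]
    rw [Finset.sum_congr rfl fun t _ => h1 t, Finset.sum_comm]
    exact Finset.sum_congr rfl fun w hw => perword hw
  rw [hsum, Finset.sum_sub_distrib, Finset.sum_const, nsmul_eq_mul]
  have hD : (0 : ℝ) < ((decks n m).card : ℝ) := by
    exact_mod_cast Finset.card_pos.mpr (decks_nonempty n m)
  rw [sub_div]
  congr 1
  · exact mul_div_cancel_left₀ _ hD.ne'
  · rw [Finset.sum_comm, Finset.sum_div]

end CG

/-- Identity: `E[S⁺] = m* H_N − ∑_{j=1}^{m*−1} E[H_{T_j}]`.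
Here the cards are revealed in the order `w 0, w 1, …` (so position `0` is the top) and
`T_j` is computed from the bottom of the deck, i.e. on the reversed word `s ↦ w s.rev`. -/
theorem ESplus_harmonic_formula (n : ℕ) (m : Fin n → ℕ) :
    ESplus n m =
      ((Finset.univ.sup m : ℕ) : ℝ) * harm (∑ i, m i) -
        ∑ j ∈ Finset.Icc 1 (Finset.univ.sup m - 1),
          expect n m (fun w => harm (T j (fun s => w s.rev))) := by
  rcases Nat.eq_zero_or_pos n with h0 | hn
  · subst h0
    haveI : IsEmpty (List (Fin 0) → Fin 0) := ⟨fun g => (g []).elim0⟩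
    have hsup : (Finset.univ : Finset (Fin 0)).sup m = 0 := by simp
    rw [ESplus, iSup, Set.range_eq_empty, Real.sSup_empty, hsup]
    simp
  · exact CG.main_pos hn m
end

section
/- Let f(x) = (1 − e^{−x})/x for x > 0. Then for all real numbers 0 < x < y, |f(x) − f(y)| ≤ (y − x)/max(x,1)². -/
/-- Elementary estimate for `f(x) = (1 − e^{−x})/x`.
For all `0 < x < y`, `|f(x) − f(y)| ≤ (y − x)/max(x,1)²`. -/
theorem one_sub_exp_div_lipschitz (x y : ℝ) (hx : 0 < x) (hxy : x < y) :
    |(1 - Real.exp (-x)) / x - (1 - Real.exp (-y)) / y| ≤ (y - x) / max x 1 ^ 2 := by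
  set f : ℝ → ℝ := fun t => (1 - Real.exp (-t)) / t with hf
  set f' : ℝ → ℝ := fun t => ((1 + t) * Real.exp (-t) - 1) / t ^ 2 with hf'
  have hM : (0:ℝ) < max x 1 := lt_of_lt_of_le one_pos (le_max_right _ _)
  set C : ℝ := 1 / max x 1 ^ 2 with hC
  have hderiv : ∀ t ∈ Set.Icc x y, HasDerivAt f (f' t) t := by
    intro t ht
    have ht0 : 0 < t := lt_of_lt_of_le hx ht.1
    have h1 : HasDerivAt (fun t : ℝ => 1 - Real.exp (-t)) (Real.exp (-t)) t := by
      have := (Real.hasDerivAt_exp (-t)).comp t (hasDerivAt_neg t)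
      refine ((hasDerivAt_const t (1:ℝ)).sub this).congr_deriv ?_
      simp
    have htne : t ≠ 0 := ne_of_gt ht0
    have := h1.div (hasDerivAt_id t) htne
    refine (this : HasDerivAt f _ t).congr_deriv ?_
    simp only [id_eq, hf']
    field_simp
    ring
  have hbound : ∀ t ∈ Set.Icc x y, ‖f' t‖ ≤ C := by
    intro t ht
    have ht0 : 0 < t := lt_of_lt_of_le hx ht.1
    have he : 1 + (-t) ≤ Real.exp (-t) := by linarith [Real.add_one_le_exp (-t)]
    have het : t + 1 ≤ Real.exp t := by linarith [Real.add_one_le_exp t]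
    have hpos : 0 < Real.exp (-t) := Real.exp_pos _
    have hept' : Real.exp (-t) * Real.exp t = 1 := by rw [← Real.exp_add]; simp
    have hn0 : (1 + t) * Real.exp (-t) - 1 ≤ 0 := by nlinarith
    have hn1 : 1 - (1 + t) * Real.exp (-t) ≤ 1 := by nlinarith
    -- 1 - (1+t)e^{-t} ≤ t^2
    have hn2 : 1 - (1 + t) * Real.exp (-t) ≤ t ^ 2 := by
      rcases le_or_gt 1 t with h | h
      · nlinarith
      · have h2 : (1 - t) * Real.exp t ≤ 1 := by
          have := Real.add_one_le_exp (-t)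
          have hept : Real.exp (-t) * Real.exp t = 1 := by
            rw [← Real.exp_add]; simp
          nlinarith [Real.exp_pos t]
        have hept : Real.exp (-t) * Real.exp t = 1 := by
          rw [← Real.exp_add]; simp
        nlinarith [Real.exp_pos t, sq_nonneg t]
    have habs : ‖f' t‖ = (1 - (1 + t) * Real.exp (-t)) / t ^ 2 := by
      rw [Real.norm_eq_abs, hf']
      rw [abs_div, abs_of_nonneg (by positivity : (0:ℝ) ≤ t ^ 2),
        abs_of_nonpos hn0]
      ring_nf
    rw [habs, hC, div_le_div_iff₀ (by positivity) (by positivity)]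
    rcases le_or_gt 1 x with h | h
    · have hmx : max x 1 = x := max_eq_left h
      rw [hmx]
      have hxt : x ≤ t := ht.1
      nlinarith
    · have hmx : max x 1 = 1 := max_eq_right h.le
      rw [hmx]
      nlinarith
  have key := Convex.norm_image_sub_le_of_norm_hasDerivWithin_le
    (f' := f') (fun t ht => (hderiv t ht).hasDerivWithinAt) hbound
    (convex_Icc x y) (Set.left_mem_Icc.2 hxy.le) (Set.right_mem_Icc.2 hxy.le)
  rw [Real.norm_eq_abs, Real.norm_eq_abs, abs_of_pos (by linarith : (0:ℝ) < y - x)] at key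
  rw [abs_sub_comm]
  calc |f y - f x| ≤ C * (y - x) := key
    _ = (y - x) / max x 1 ^ 2 := by rw [hC]; ring
end
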